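/- arXiv:2510.18246 — 4 statements merged into one kernel-verified Lean document; each statement's English description precedes it below -/
import Mathlib

section
/- For any integer n ≥ 5, let G be an edge-colored complete 3-uniform hypergraph K_n^{(3)} that is rainbow 𝒯-free and uses at least 3 colors, say |C(G)| = k ≥ 3. Then, after renumbering the colors as 1,2,...,k, the vertex set V(G) can be partitioned into k−1 parts V_2, V_3, ..., V_k such that for every i ∈ {2,3,...,k} one has {i} ⊆ C(V_i) ⊆ {1, i} (i.e., every edge contained in V_i has color 1 or i, and at least one edge contained in V_i has color i), and every edge not entirely contained in a single part has color 1. -/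
/-
A pair `{a, b}` of vertices is bichromatic with colors `α ≠ β` if some edges `abx` and `aby` have
colors `α` and `β`. Forbidding rainbow tight paths forces a pair to see at most two colors, and
every edge meeting a bichromatic pair `{u, v}` to carry one of its two colors. Two intersecting
edges of different colors yield a bichromatic pair with exactly these two colors, and an edge
through one vertex of each of three bichromatic pairs shows that any three such color pairs share
a color; hence all of them contain one color `χ`, which is renumbered `1`. Edges of two distinct
colors other than `χ` are then vertex-disjoint, so the vertices on an edge of color `γ ≠ χ` form
the part of `γ`, and the vertices lying only on edges of color `χ` may join any part.
-/

/-- The set of colors appearing on the (3-element) edges of an edge-colored `K_n^{(3)}`. -/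
def colorFinset {n : ℕ} (c : Finset (Fin n) → ℕ) : Finset ℕ :=
  (Finset.powersetCard 3 (Finset.univ : Finset (Fin n))).image c

/-- There is a rainbow tight path `𝒯` (edges `v₁v₂v₃, v₂v₃v₄, v₃v₄v₅`). -/
def HasRainbowTight {n : ℕ} (c : Finset (Fin n) → ℕ) : Prop :=
  ∃ v : Fin 5 → Fin n, Function.Injective v ∧
    c {v 0, v 1, v 2} ≠ c {v 1, v 2, v 3} ∧
    c {v 0, v 1, v 2} ≠ c {v 2, v 3, v 4} ∧
    c {v 1, v 2, v 3} ≠ c {v 2, v 3, v 4}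

open Finset

theorem exists_center_of_forall_three {κ : Type*} {R : κ → κ → Prop}
    (h : ∀ ⦃a b a' b' a'' b''⦄, R a b → R a' b' → R a'' b'' →
      ∃ x, (x = a ∨ x = b) ∧ (x = a' ∨ x = b') ∧ (x = a'' ∨ x = b'')) {α β : κ} (hαβ : R α β) :
    ∃ χ, (χ = α ∨ χ = β) ∧ ∀ ⦃γ δ⦄, R γ δ → χ = γ ∨ χ = δ := by
  by_contra! hno
  obtain ⟨γ, δ, hγδ, hαγ, hαδ⟩ := hno α (.inl rfl)
  obtain ⟨γ', δ', hγδ', hβγ', hβδ'⟩ := hno β (.inr rfl)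
  obtain ⟨x, hx, hx', hx''⟩ := h hαβ hγδ hγδ'
  rcases hx with rfl | rfl <;> tauto

theorem Finset.exists_bijOn_Icc_one {α : Type*} {S : Finset α} {a : α} (ha : a ∈ S) :
    ∃ σ : α → ℕ, Set.BijOn σ S (Icc 1 #S) ∧ ∀ b ∈ S, σ b = 1 ↔ b = a := by
  obtain ⟨σ₀, hσ₀⟩ :=
    S.finite_toSet.exists_bijOn_of_encard_eq (t := ((Icc 1 #S : Finset ℕ) : Set ℕ))
    (by rw [Set.encard_coe_eq_coe_finsetCard, Set.encard_coe_eq_coe_finsetCard]; simp)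
  have h₁ : 1 ∈ Icc 1 #S := by simpa using card_pos.mpr ⟨a, ha⟩
  have hσ := (Equiv.bijOn_swap (hσ₀.mapsTo ha) (mem_coe.mpr h₁)).comp hσ₀
  have hσa : (Equiv.swap (σ₀ a) 1 ∘ σ₀) a = 1 := by simp
  exact ⟨_, hσ, fun b hb => ⟨fun h => hσ.injOn hb ha (h.trans hσa.symm), fun h => h ▸ hσa⟩⟩

theorem Finset.exists_eq_triple_of_mem {α : Type*} [DecidableEq α] {e : Finset α} {u : α}
    (he : #e = 3) (hu : u ∈ e) :
    ∃ a b, [u, a, b].Nodup ∧ e = {u, a, b} := by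
  obtain ⟨a, b, hab, he⟩ := card_eq_two.mp (by rw [card_erase_of_mem hu, he] : #(e.erase u) = 2)
  have hua : a ≠ u := ((mem_erase.mp (he ▸ mem_insert_self a {b})).1)
  have hub : b ≠ u := ((mem_erase.mp (he ▸ mem_insert_of_mem (mem_singleton_self b))).1)
  exact ⟨a, b, by simp [hab, hua.symm, hub.symm], by rw [← he, insert_erase hu]⟩

theorem Finset.exists_eq_triple_of_mem_of_mem {α : Type*} [DecidableEq α] {e : Finset α} {u v : α}
    (he : #e = 3) (hu : u ∈ e) (hv : v ∈ e) (huv : u ≠ v) :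
    ∃ x, x ≠ u ∧ x ≠ v ∧ e = {u, v, x} := by
  obtain ⟨a, b, hnd, rfl⟩ := exists_eq_triple_of_mem he hu
  simp only [mem_insert, mem_singleton] at hv
  simp only [List.nodup_cons, List.mem_cons, List.not_mem_nil] at hnd
  rcases hv with rfl | rfl | rfl
  · exact absurd rfl huv
  · exact ⟨b, by grind, by grind, rfl⟩
  · exact ⟨a, by grind, by grind, by rw [pair_comm]⟩

section Hypergraph

variable {V κ : Type*} [DecidableEq V] {c : Finset V → κ}

def TightPathFree (c : Finset V → κ) : Prop :=
  ∀ ⦃v₁ v₂ v₃ v₄ v₅ : V⦄, [v₁, v₂, v₃, v₄, v₅].Nodup →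
    c {v₁, v₂, v₃} = c {v₂, v₃, v₄} ∨ c {v₁, v₂, v₃} = c {v₃, v₄, v₅} ∨
      c {v₂, v₃, v₄} = c {v₃, v₄, v₅}

structure IsBichromaticPair (c : Finset V → κ) (a b : V) (α β : κ) : Prop where
  ne : a ≠ b
  color_ne : α ≠ β
  exists_left : ∃ x, x ≠ a ∧ x ≠ b ∧ c {a, b, x} = α
  exists_right : ∃ y, y ≠ a ∧ y ≠ b ∧ c {a, b, y} = β

def IsCentralColor (c : Finset V → κ) (χ : κ) : Prop :=
  ∀ ⦃e f : Finset V⦄, #e = 3 → #f = 3 → (e ∩ f).Nonempty → c e ≠ c f → c e = χ ∨ c f = χ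

variable {a b t u v w x y z : V} {α β γ δ : κ}

namespace TightPathFree

theorem color_eq_of_three_colors (hc : TightPathFree c) (h : [a, b, x, y, z].Nodup)
    (hxy : c {a, b, x} ≠ c {a, b, y}) (hxz : c {a, b, x} ≠ c {a, b, z})
    (hyz : c {a, b, y} ≠ c {a, b, z}) : c {a, x, z} = c {a, b, y} := by
  have h₁ := hc (v₁ := y) (v₂ := b) (v₃ := a) (v₄ := x) (v₅ := z) (by simp at h ⊢; tauto)
  have h₂ := hc (v₁ := y) (v₂ := b) (v₃ := a) (v₄ := z) (v₅ := x) (by simp at h ⊢; tauto)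
  -- Spelling every edge as an AC-normalised union of singletons makes equal edges syntactically
  -- equal, after which only equalities of colors remain.
  simp only [insert_eq, union_comm, union_left_comm] at *
  grind

theorem link_color_eq_or_eq_or_eq (hc : TightPathFree c) (h : [a, b, x, y, z].Nodup) :
    c {a, b, x} = c {a, b, y} ∨ c {a, b, x} = c {a, b, z} ∨ c {a, b, y} = c {a, b, z} := by
  by_contra! hne
  obtain ⟨hxy, hxz, hyz⟩ := hne
  have h₁ := hc.color_eq_of_three_colors h hxy hxz hyz
  have h₂ := hc.color_eq_of_three_colors (a := b) (b := a) (x := x) (y := z) (z := y)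
    (by simp at h ⊢; tauto) (by rwa [insert_comm, insert_comm b])
    (by rwa [insert_comm, insert_comm b]) (by rwa [insert_comm, insert_comm b, ne_comm])
  have h₃ := hc (v₁ := z) (v₂ := a) (v₃ := x) (v₄ := b) (v₅ := y) (by simp at h ⊢; tauto)
  simp only [insert_eq, union_comm, union_left_comm] at *
  grind

end TightPathFree

namespace IsBichromaticPair

theorem symm (h : IsBichromaticPair c a b α β) : IsBichromaticPair c b a α β := by
  obtain ⟨hab, hαβ, ⟨x, hxa, hxb, hx⟩, ⟨y, hya, hyb, hy⟩⟩ := h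
  exact ⟨hab.symm, hαβ, ⟨x, hxb, hxa, by rwa [insert_comm]⟩, ⟨y, hyb, hya, by rwa [insert_comm]⟩⟩

theorem swap (h : IsBichromaticPair c a b α β) : IsBichromaticPair c a b β α :=
  ⟨h.ne, h.color_ne.symm, h.exists_right, h.exists_left⟩

theorem color_mem (hc : TightPathFree c) (h : IsBichromaticPair c a b α β) (hza : z ≠ a)
    (hzb : z ≠ b) : c {a, b, z} = α ∨ c {a, b, z} = β := by
  obtain ⟨hab, hαβ, ⟨x, hxa, hxb, rfl⟩, ⟨y, hya, hyb, rfl⟩⟩ := h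
  by_cases hzx : z = x
  · exact .inl (by rw [hzx])
  by_cases hzy : z = y
  · exact .inr (by rw [hzy])
  have hxy : x ≠ y := fun hxy => hαβ (by rw [hxy])
  have := hc.link_color_eq_or_eq_or_eq (a := a) (b := b) (x := x) (y := y) (z := z) (by simp; tauto)
  tauto

theorem color_eq_of_color_ne (hc : TightPathFree c) (h : IsBichromaticPair c x y γ δ)
    (hnd : [x, y, w, t, z].Nodup) (hγ : c {y, w, t} ≠ γ) (hδ : c {y, w, t} ≠ δ) :
    c {x, y, z} = c {x, y, w} := by
  have hw := h.color_mem hc (z := w) (by simp at hnd; tauto) (by simp at hnd; tauto)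
  have hz := h.color_mem hc (z := z) (by simp at hnd; tauto) (by simp at hnd; tauto)
  have := hc (v₁ := t) (v₂ := w) (v₃ := y) (v₄ := x) (v₅ := z) (by simp at hnd ⊢; tauto)
  simp only [insert_eq, union_comm, union_left_comm] at *
  grind

theorem color_ne_of_color_ne (hc : TightPathFree c) (h : IsBichromaticPair c x y γ δ)
    (hnd : [x, y, w, t].Nodup) (hγ : c {y, w, t} ≠ γ) (hδ : c {y, w, t} ≠ δ) :
    c {x, y, t} ≠ c {x, y, w} := by
  have hother : ∃ s, s ≠ x ∧ s ≠ y ∧ c {x, y, s} ≠ c {x, y, w} := by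
    obtain ⟨s, hsx, hsy, hs⟩ := h.exists_left
    obtain ⟨s', hs'x, hs'y, hs'⟩ := h.exists_right
    by_cases hs'' : c {x, y, s} = c {x, y, w}
    · exact ⟨s', hs'x, hs'y, by rw [hs', ← hs'', hs]; exact h.color_ne.symm⟩
    · exact ⟨s, hsx, hsy, hs''⟩
  obtain ⟨s, hsx, hsy, hs⟩ := hother
  by_cases hst : s = t
  · rwa [← hst]
  have hsw : s ≠ w := by rintro rfl; exact hs rfl
  exact absurd (h.color_eq_of_color_ne hc (by simp at hnd ⊢; tauto) hγ hδ) hs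

/-- If `uab` had a third color, the tight paths `a b u v z` would give every `uvz` with
`z ∉ {a, b}` the color of `uvb`, so the other color of `{u, v}` would sit on `uva`, and the tight
path `b a u v z` would be rainbow. -/
theorem color_mem_of_nodup [Fintype V] (hc : TightPathFree c) (hV : 5 ≤ Fintype.card V)
    (h : IsBichromaticPair c u v γ δ) (hnd : [u, v, a, b].Nodup) :
    c {u, a, b} = γ ∨ c {u, a, b} = δ := by
  by_contra! hne
  obtain ⟨z, hz⟩ : ∃ z, z ∉ ({u, v, a, b} : Finset V) := by
    by_contra! hall
    have := card_le_card (fun z _ => hall z : (univ : Finset V) ⊆ {u, v, a, b})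
    have := card_le_four (a := u) (b := v) (c := a) (d := b)
    simp only [card_univ] at *
    omega
  have hnd' : [v, u, b, a, z].Nodup := by simp at hnd hz ⊢; tauto
  have hγ : c {u, b, a} ≠ γ := by simpa only [insert_eq, union_comm, union_left_comm] using hne.1
  have hδ : c {u, b, a} ≠ δ := by simpa only [insert_eq, union_comm, union_left_comm] using hne.2
  have h₁ := h.symm.color_eq_of_color_ne hc hnd' hγ hδ
  have h₂ := h.symm.color_ne_of_color_ne hc (by simp at hnd ⊢; tauto) hγ hδ
  have hau := h.symm.color_mem hc (z := a) (by simp at hnd; tauto) (by simp at hnd; tauto)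
  have hbu := h.symm.color_mem hc (z := z) (by simp at hnd'; tauto) (by simp at hnd'; tauto)
  have := hc (v₁ := b) (v₂ := a) (v₃ := u) (v₄ := v) (v₅ := z) (by simp at hnd' ⊢; tauto)
  simp only [insert_eq, union_comm, union_left_comm] at *
  grind

theorem color_mem_of_mem [Fintype V] (hc : TightPathFree c) (hV : 5 ≤ Fintype.card V)
    (h : IsBichromaticPair c u v γ δ) {e : Finset V} (he : #e = 3) (hu : u ∈ e) :
    c e = γ ∨ c e = δ := by
  obtain ⟨a, b, hnd, rfl⟩ := exists_eq_triple_of_mem he hu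
  by_cases hv : v ∈ ({u, a, b} : Finset V)
  · obtain ⟨x, hxu, hxv, hx⟩ := exists_eq_triple_of_mem_of_mem he hu hv h.ne
    rw [hx]
    exact h.color_mem hc hxu hxv
  · exact h.color_mem_of_nodup hc hV (by simp at hnd hv ⊢; tauto)

end IsBichromaticPair

theorem isBichromaticPair_of_mem_inter {e f : Finset V} (he : #e = 3) (hf : #f = 3)
    (hne : c e ≠ c f) (hu : u ∈ e ∩ f) (hv : v ∈ e ∩ f) (huv : u ≠ v) :
    IsBichromaticPair c u v (c e) (c f) := by
  rw [mem_inter] at hu hv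
  obtain ⟨x, hxu, hxv, rfl⟩ := exists_eq_triple_of_mem_of_mem he hu.1 hv.1 huv
  obtain ⟨y, hyu, hyv, rfl⟩ := exists_eq_triple_of_mem_of_mem hf hu.2 hv.2 huv
  exact ⟨huv, hne, ⟨x, hxu, hxv, rfl⟩, ⟨y, hyu, hyv, rfl⟩⟩

theorem TightPathFree.exists_isBichromaticPair (hc : TightPathFree c) {e f : Finset V}
    (he : #e = 3) (hf : #f = 3) (hef : (e ∩ f).Nonempty) (hne : c e ≠ c f) :
    ∃ a b, IsBichromaticPair c a b (c e) (c f) := by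
  obtain ⟨w, hw⟩ := hef
  by_cases hshare : ∃ v ∈ e ∩ f, v ≠ w
  · obtain ⟨v, hv, hvw⟩ := hshare
    exact ⟨w, v, isBichromaticPair_of_mem_inter he hf hne hw hv hvw.symm⟩
  push Not at hshare
  rw [mem_inter] at hw
  obtain ⟨p, q, hpq, rfl⟩ := exists_eq_triple_of_mem he hw.1
  obtain ⟨r, s, hrs, rfl⟩ := exists_eq_triple_of_mem hf hw.2
  have hp := hshare p
  have hq := hshare q
  simp only [mem_inter, mem_insert, mem_singleton] at hp hq
  have hnd : [p, q, w, r, s].Nodup := by simp at hpq hrs ⊢; grind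
  -- Here `e ∩ f = {w}`; the middle edge `qwr` of the tight path `p q w r s` shares a pair with
  -- `e` or with `f`, and differs in color from that one.
  set g : Finset V := {q, w, r}
  have hg : #g = 3 := by simp at hnd ⊢; grind
  rcases hc hnd with h | h | h
  · have hge : c g = c {w, p, q} := by
      simpa only [g, insert_eq, union_comm, union_left_comm] using h.symm
    refine ⟨w, r, hge ▸ isBichromaticPair_of_mem_inter hg hf (hge ▸ hne) ?_ ?_ ?_⟩ <;>
      simp_all [g]
  · exact absurd (by simpa only [insert_eq, union_comm, union_left_comm] using h) hne
  · have hgf : c g = c {w, r, s} := by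
      simpa only [g, insert_eq, union_comm, union_left_comm] using h
    refine ⟨w, q, hgf ▸ isBichromaticPair_of_mem_inter he hg (hgf ▸ hne) ?_ ?_ ?_⟩ <;>
      simp_all [g]

theorem IsBichromaticPair.exists_color_left (h : IsBichromaticPair c a b α β) :
    ∃ e : Finset V, #e = 3 ∧ c e = α := by
  obtain ⟨x, hxa, hxb, hx⟩ := h.exists_left
  exact ⟨_, card_eq_three.mpr ⟨a, b, x, h.ne, hxa.symm, hxb.symm, rfl⟩, hx⟩

theorem TightPathFree.exists_common_color [Fintype V] (hc : TightPathFree c)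
    (hV : 5 ≤ Fintype.card V) {u₁ v₁ u₂ v₂ u₃ v₃ : V} {α₁ β₁ α₂ β₂ α₃ β₃ : κ}
    (h₁ : IsBichromaticPair c u₁ v₁ α₁ β₁) (h₂ : IsBichromaticPair c u₂ v₂ α₂ β₂)
    (h₃ : IsBichromaticPair c u₃ v₃ α₃ β₃) :
    ∃ χ, (χ = α₁ ∨ χ = β₁) ∧ (χ = α₂ ∨ χ = β₂) ∧ (χ = α₃ ∨ χ = β₃) := by
  obtain ⟨e, hsub, he⟩ := exists_superset_card_eq (s := {u₁, u₂, u₃}) card_le_three (by omega)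
  exact ⟨c e, h₁.color_mem_of_mem hc hV he (hsub (by simp)),
    h₂.color_mem_of_mem hc hV he (hsub (by simp)), h₃.color_mem_of_mem hc hV he (hsub (by simp))⟩

theorem TightPathFree.exists_isCentralColor [Fintype V] (hc : TightPathFree c)
    (hV : 5 ≤ Fintype.card V) : ∃ e : Finset V, #e = 3 ∧ IsCentralColor c (c e) := by
  by_cases hR : ∃ a b α β, IsBichromaticPair c a b α β
  · obtain ⟨a, b, α, β, hab⟩ := hR
    obtain ⟨χ, hχ, hcenter⟩ := exists_center_of_forall_three
      (R := fun α β => ∃ a b, IsBichromaticPair c a b α β)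
      (fun _ _ _ _ _ _ ⟨_, _, h₁⟩ ⟨_, _, h₂⟩ ⟨_, _, h₃⟩ => hc.exists_common_color hV h₁ h₂ h₃)
      ⟨a, b, hab⟩
    obtain ⟨e, he, rfl⟩ : ∃ e : Finset V, #e = 3 ∧ c e = χ := by
      rcases hχ with rfl | rfl
      exacts [hab.exists_color_left, hab.swap.exists_color_left]
    refine ⟨e, he, fun f g hf hg hfg hne => ?_⟩
    rcases hcenter (hc.exists_isBichromaticPair hf hg hfg hne) with h | h
    exacts [.inl h.symm, .inr h.symm]
  · push Not at hR
    obtain ⟨e, -, he⟩ := exists_subset_card_eq (s := (univ : Finset V)) (n := 3) (by simp; omega)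
    exact ⟨e, he, fun f g hf hg hfg hne =>
      (hR _ _ _ _ (hc.exists_isBichromaticPair hf hg hfg hne).choose_spec.choose_spec).elim⟩

end Hypergraph

section Partition

variable {V κ : Type*} {c : Finset V → κ} {χ : κ} {σ : κ → ℕ} {d : ℕ}

noncomputable def partIndex (c : Finset V → κ) (χ : κ) (σ : κ → ℕ) (d : ℕ) (v : V) : ℕ := by
  classical
  exact if h : ∃ e : Finset V, #e = 3 ∧ v ∈ e ∧ c e ≠ χ then σ (c h.choose) else d

theorem partIndex_mem {T : Set ℕ} (hd : d ∈ T)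
    (hσ : ∀ e : Finset V, #e = 3 → c e ≠ χ → σ (c e) ∈ T) (v : V) : partIndex c χ σ d v ∈ T := by
  unfold partIndex
  split_ifs with h
  exacts [hσ _ h.choose_spec.1 h.choose_spec.2.2, hd]

variable [DecidableEq V]

theorem IsCentralColor.partIndex_eq {e : Finset V} {v : V}
    (hχ : IsCentralColor c χ) (he : #e = 3) (hv : v ∈ e) (hne : c e ≠ χ) :
    partIndex c χ σ d v = σ (c e) := by
  have h : ∃ e : Finset V, #e = 3 ∧ v ∈ e ∧ c e ≠ χ := ⟨e, he, hv, hne⟩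
  rw [partIndex, dif_pos h]
  obtain ⟨he', hv', hne'⟩ := h.choose_spec
  congr 1
  by_contra hcol
  rcases hχ he' he ⟨v, mem_inter.mpr ⟨hv', hv⟩⟩ hcol with h | h
  exacts [hne' h, hne h]

theorem IsCentralColor.exists_partition [Fintype V] (hχ : IsCentralColor c χ) {T : Set ℕ}
    (hd : d ∈ T) (hσ : ∀ e : Finset V, #e = 3 → c e ≠ χ → σ (c e) ∈ T)
    (hsurj : ∀ i ∈ T, ∃ e : Finset V, #e = 3 ∧ c e ≠ χ ∧ σ (c e) = i) :
    ∃ P : ℕ → Finset V,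
      (∀ i j, i ≠ j → Disjoint (P i) (P j)) ∧
      (∀ v, ∃ i ∈ T, v ∈ P i) ∧
      (∀ i, ∀ e : Finset V, #e = 3 → e ⊆ P i → c e = χ ∨ σ (c e) = i) ∧
      (∀ i ∈ T, ∃ e : Finset V, #e = 3 ∧ e ⊆ P i ∧ σ (c e) = i) ∧
      (∀ e : Finset V, #e = 3 → c e ≠ χ → e ⊆ P (σ (c e))) := by
  classical
  have hfiber (e : Finset V) (he : #e = 3) (hne : c e ≠ χ) :
      e ⊆ univ.filter (partIndex c χ σ d · = σ (c e)) := fun v hv => by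
    simp [hχ.partIndex_eq he hv hne]
  refine ⟨fun i => univ.filter (partIndex c χ σ d · = i), fun i j hij => ?_,
    fun v => ⟨_, partIndex_mem hd hσ v, by simp⟩, fun i e he hsub => ?_, fun i hi => ?_, hfiber⟩
  · rw [disjoint_filter]
    exact fun v _ hi hj => hij (hi ▸ hj)
  · by_cases hne : c e = χ
    · exact .inl hne
    obtain ⟨v, hv⟩ := card_pos.mp (by omega : 0 < #e)
    have := hsub hv
    simp only [mem_filter, mem_univ, true_and] at this
    exact .inr (by rw [← this, hχ.partIndex_eq he hv hne])
  · obtain ⟨e, he, hne, rfl⟩ := hsurj i hi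
    exact ⟨e, he, hfiber e he hne, rfl⟩

end Partition

theorem mem_colorFinset {n : ℕ} {c : Finset (Fin n) → ℕ} {γ : ℕ} :
    γ ∈ colorFinset c ↔ ∃ e : Finset (Fin n), #e = 3 ∧ c e = γ := by
  simp [colorFinset]

theorem tightPathFree_of_not_hasRainbowTight {n : ℕ} {c : Finset (Fin n) → ℕ}
    (h : ¬ HasRainbowTight c) : TightPathFree c := by
  intro v₁ v₂ v₃ v₄ v₅ hnd
  by_contra! hne
  refine h ⟨![v₁, v₂, v₃, v₄, v₅], fun i j hij => ?_, hne⟩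
  simp at hnd
  fin_cases i <;> fin_cases j <;> simp_all

/-- Structure theorem for rainbow-`𝒯`-free colorings of `K_n^{(3)}` with at least 3 colors:
after renumbering the `k` colors as `1, …, k` (via `σ`), the vertex set can be partitioned
into `k - 1` parts `P i` (`i ∈ {2, …, k}`) so that the edges inside `P i` have colors in
`{1, i}` with color `i` appearing, and all remaining edges have color `1`. -/
theorem tight_path_structure (n : ℕ) (hn : 5 ≤ n) (c : Finset (Fin n) → ℕ)
    (hfree : ¬ HasRainbowTight c) (k : ℕ) (hk : k = (colorFinset c).card)
    (hk3 : 3 ≤ k) :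
    ∃ σ : ℕ → ℕ,
      Set.InjOn σ (colorFinset c : Set ℕ) ∧
      (∀ e : Finset (Fin n), e.card = 3 → σ (c e) ∈ Finset.Icc 1 k) ∧
      ∃ P : ℕ → Finset (Fin n),
        (∀ i ∈ Finset.Icc 2 k, ∀ j ∈ Finset.Icc 2 k, i ≠ j → Disjoint (P i) (P j)) ∧
        (∀ v : Fin n, ∃ i ∈ Finset.Icc 2 k, v ∈ P i) ∧
        (∀ i ∈ Finset.Icc 2 k,
          (∀ e : Finset (Fin n), e.card = 3 → e ⊆ P i → σ (c e) = 1 ∨ σ (c e) = i) ∧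
          (∃ e : Finset (Fin n), e.card = 3 ∧ e ⊆ P i ∧ σ (c e) = i)) ∧
        (∀ e : Finset (Fin n), e.card = 3 → (∀ i ∈ Finset.Icc 2 k, ¬ e ⊆ P i) →
          σ (c e) = 1) := by
  classical
  have hmem (e : Finset (Fin n)) (he : #e = 3) : c e ∈ colorFinset c :=
    mem_colorFinset.mpr ⟨e, he, rfl⟩
  obtain ⟨e₀, he₀, hχ⟩ :=
    (tightPathFree_of_not_hasRainbowTight hfree).exists_isCentralColor (by simpa using hn)
  obtain ⟨σ, hσ, hσ₁⟩ := exists_bijOn_Icc_one (hmem e₀ he₀)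
  rw [← hk] at hσ
  have hσ₂ (e : Finset (Fin n)) (he : #e = 3) (hne : c e ≠ c e₀) : σ (c e) ∈ Icc 2 k := by
    have := hσ.mapsTo (hmem e he)
    have := (hσ₁ _ (hmem e he)).not.mpr hne
    simp only [coe_Icc, Set.mem_Icc, mem_Icc] at *
    omega
  have hsurj (i : ℕ) (hi : i ∈ Icc 2 k) :
      ∃ e : Finset (Fin n), #e = 3 ∧ c e ≠ c e₀ ∧ σ (c e) = i := by
    obtain ⟨γ, hγ, rfl⟩ := hσ.surjOn (Icc_subset_Icc_left one_le_two hi)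
    obtain ⟨e, he, rfl⟩ := mem_colorFinset.mp hγ
    exact ⟨e, he, fun h => by simp [(hσ₁ _ hγ).mpr h] at hi, rfl⟩
  obtain ⟨P, hdisj, hcover, hinside, hexists, hcross⟩ :=
    hχ.exists_partition (d := 2) (by simp; omega) hσ₂ hsurj
  refine ⟨σ, hσ.injOn, fun e he => hσ.mapsTo (hmem e he), P, fun i _ j _ => hdisj i j, hcover,
    fun i hi => ⟨fun e he hsub => (hinside i e he hsub).imp_left (hσ₁ _ (hmem e he)).mpr,
      hexists i hi⟩, fun e he hnot => (hσ₁ _ (hmem e he)).mpr ?_⟩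
  by_contra hne
  exact hnot _ (hσ₂ e he hne) (hcross e he hne)
end

section
/- For any integer n ≥ 5, the anti-Ramsey number of the tight path satisfies ar(n, 𝒯) = ⌊n/3⌋ + 2. -/
/-- The anti-Ramsey number `ar(n, 𝒯)`: the minimum `k` such that every edge-coloring of
`K_n^{(3)}` using at least `k` colors contains a rainbow `𝒯`. -/
noncomputable def antiRamseyTight (n : ℕ) : ℕ :=
  sInf {k : ℕ | ∀ c : Finset (Fin n) → ℕ, k ≤ (colorFinset c).card → HasRainbowTight c}

section AntiRamseyAux

section Perms
variable {α : Type*} [DecidableEq α]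
lemma ts01 (a b c : α) : ({a,b,c} : Finset α) = {b,a,c} := by
  ext t; simp [Finset.mem_insert]; tauto
lemma ts12 (a b c : α) : ({a,b,c} : Finset α) = {a,c,b} := by
  ext t; simp [Finset.mem_insert]; tauto
lemma ts02 (a b c : α) : ({a,b,c} : Finset α) = {c,b,a} := by
  ext t; simp [Finset.mem_insert]; tauto
lemma trot (a b c : α) : ({a,b,c} : Finset α) = {b,c,a} := by
  ext t; simp [Finset.mem_insert]; tauto
lemma trot2 (a b c : α) : ({a,b,c} : Finset α) = {c,a,b} := by
  ext t; simp [Finset.mem_insert]; tauto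
end Perms

variable {n : ℕ} {c : Finset (Fin n) → ℕ}

lemma nr5 (hNR : ¬ HasRainbowTight c)
    (v0 v1 v2 v3 v4 : Fin n)
    (h01 : v0 ≠ v1) (h02 : v0 ≠ v2) (h03 : v0 ≠ v3) (h04 : v0 ≠ v4)
    (h12 : v1 ≠ v2) (h13 : v1 ≠ v3) (h14 : v1 ≠ v4)
    (h23 : v2 ≠ v3) (h24 : v2 ≠ v4) (h34 : v3 ≠ v4) :
    c {v0,v1,v2} = c {v1,v2,v3} ∨ c {v0,v1,v2} = c {v2,v3,v4} ∨
      c {v1,v2,v3} = c {v2,v3,v4} := by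
  by_contra hc
  push_neg at hc
  apply hNR
  refine ⟨![v0,v1,v2,v3,v4], ?_, ?_, ?_, ?_⟩
  · intro i j hij
    fin_cases i <;> fin_cases j <;> simp_all
  · simpa using hc.1
  · simpa using hc.2.1
  · simpa using hc.2.2

/-- L1x : key path lemma. -/
lemma L1x (hNR : ¬ HasRainbowTight c) (x y z w u : Fin n)
    (hxy : x ≠ y) (hxz : x ≠ z) (hxw : x ≠ w) (hxu : x ≠ u)
    (hyz : y ≠ z) (hyw : y ≠ w) (hyu : y ≠ u)
    (hzw : z ≠ w) (hzu : z ≠ u) (hwu : w ≠ u)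
    (h : c {x,y,z} ≠ c {x,y,w}) :
    c {x,z,u} = c {x,y,z} ∨ c {x,z,u} = c {x,y,w} := by
  have key := nr5 hNR w y x z u hyw.symm hxw.symm hzw.symm hwu hxy.symm hyz hyu hxz hxu hzu
  have e1 : c {w,y,x} = c {x,y,w} := congrArg c (ts02 w y x)
  have e2 : c {y,x,z} = c {x,y,z} := congrArg c (ts01 y x z)
  rw [e1, e2] at key
  rcases key with h1 | h1 | h1
  · exact absurd h1.symm h
  · exact Or.inr h1.symm
  · exact Or.inl h1.symm

/-- The link of a pair takes at most two values. -/
lemma link2 (hNR : ¬ HasRainbowTight c) (x y z w u : Fin n)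
    (hxy : x ≠ y) (hzx : z ≠ x) (hzy : z ≠ y) (hwx : w ≠ x) (hwy : w ≠ y)
    (hux : u ≠ x) (huy : u ≠ y)
    (h : c {x,y,z} ≠ c {x,y,w}) :
    c {x,y,u} = c {x,y,z} ∨ c {x,y,u} = c {x,y,w} := by
  have hzw : z ≠ w := fun he => h (by rw [he])
  by_cases huz : u = z
  · exact Or.inl (by rw [huz])
  by_cases huw : u = w
  · exact Or.inr (by rw [huw])
  by_contra hcon
  push_neg at hcon
  obtain ⟨hgz, hgw⟩ := hcon
  have A := L1x hNR x y z u w hxy hzx.symm hux.symm hwx.symm hzy.symm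
    huy.symm hwy.symm (fun he => huz he.symm) hzw huw hgz.symm
  have B := L1x hNR x y w u z hxy hwx.symm hux.symm hzx.symm hwy.symm
    huy.symm hzy.symm (fun he => huw he.symm) hzw.symm huz hgw.symm
  rw [show ({x,w,z} : Finset (Fin n)) = {x,z,w} from ts12 x w z] at B
  have h1 : c {x,z,w} = c {x,y,u} := by
    rcases A with hA | hA
    · rcases B with hB | hB
      · exact absurd (hA.symm.trans hB) (fun he => h he)
      · exact hB
    · exact hA
  have hyx1 : c {y,x,z} = c {x,y,z} := congrArg c (ts01 y x z)
  have hyx2 : c {y,x,w} = c {x,y,w} := congrArg c (ts01 y x w)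
  have hyx3 : c {y,x,u} = c {x,y,u} := congrArg c (ts01 y x u)
  have C := L1x hNR y x z w u hxy.symm hzy.symm hwy.symm huy.symm hzx.symm
    hwx.symm hux.symm hzw (fun he => huz he.symm) (fun he => huw he.symm)
    (by rw [hyx1, hyx2]; exact h)
  rw [hyx1, hyx2] at C
  have D := L1x hNR y x u w z hxy.symm huy.symm hwy.symm hzy.symm hux.symm
    hwx.symm hzx.symm huw huz hzw.symm
    (by rw [hyx3, hyx2]; exact hgw)
  rw [hyx3, hyx2, show ({y,u,z} : Finset (Fin n)) = {y,z,u} from ts12 y u z] at D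
  have h2 : c {y,z,u} = c {x,y,w} := by
    rcases C with hC | hC
    · rcases D with hD | hD
      · exact absurd (hD.symm.trans hC) hgz
      · exact hD
    · exact hC
  have key := nr5 hNR w x z y u hwx hzw.symm hwy (fun he => huw he.symm)
    hzx.symm hxy hux.symm hzy (fun he => huz he.symm) huy.symm
  rw [show ({w,x,z} : Finset (Fin n)) = {x,z,w} from trot w x z,
    show ({x,z,y} : Finset (Fin n)) = {x,y,z} from ts12 x z y,
    show ({z,y,u} : Finset (Fin n)) = {y,z,u} from ts01 z y u, h1, h2] at key
  rcases key with hk | hk | hk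
  · exact hgz hk
  · exact hgw hk
  · exact h hk

lemma exists_fifth (hn : 5 ≤ n) (x y z w : Fin n) :
    ∃ u : Fin n, u ≠ x ∧ u ≠ y ∧ u ≠ z ∧ u ≠ w := by
  have h4 : ({x,y,z,w} : Finset (Fin n)).card < (Finset.univ : Finset (Fin n)).card := by
    have : ({x,y,z,w} : Finset (Fin n)).card ≤ 4 :=
      le_trans (Finset.card_insert_le _ _) (by
        exact Nat.succ_le_succ (le_trans (Finset.card_insert_le _ _)
          (Nat.succ_le_succ (le_trans (Finset.card_insert_le _ _)
            (Nat.succ_le_succ (le_of_eq (Finset.card_singleton _)))))))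
    simp only [Finset.card_univ, Fintype.card_fin]
    omega
  have hns : ¬ (Finset.univ : Finset (Fin n)) ⊆ {x,y,z,w} := fun h =>
    absurd (Finset.card_le_card h) (by omega)
  obtain ⟨u, -, hu⟩ := Finset.not_subset.mp hns
  simp only [Finset.mem_insert, Finset.mem_singleton, not_or] at hu
  exact ⟨u, hu.1, hu.2.1, hu.2.2.1, hu.2.2.2⟩

/-- Every edge through the first vertex of a non-flat pair has one of the two link colors. -/
lemma L3 (hn : 5 ≤ n) (hNR : ¬ HasRainbowTight c) (x y z w : Fin n)
    (hxy : x ≠ y) (hzx : z ≠ x) (hzy : z ≠ y) (hwx : w ≠ x) (hwy : w ≠ y)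
    (hc : c {x,y,z} ≠ c {x,y,w}) (s t : Fin n)
    (hsx : s ≠ x) (htx : t ≠ x) (hst : s ≠ t) :
    c {x,s,t} = c {x,y,z} ∨ c {x,s,t} = c {x,y,w} := by
  by_cases hsy : s = y
  · subst hsy
    exact link2 hNR x s z w t hxy hzx hzy hwx hwy htx hst.symm hc
  by_cases hty : t = y
  · subst hty
    rw [show ({x,s,t} : Finset (Fin n)) = {x,t,s} from ts12 x s t]
    exact link2 hNR x t z w s hxy hzx hzy hwx hwy hsx hsy hc
  -- main case : s, t ∉ {x, y}
  have hv : ∃ v : Fin n, v ≠ x ∧ v ≠ y ∧ v ≠ s ∧ v ≠ t ∧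
      (c {x,y,v} ≠ c {x,y,s} ∨ c {x,y,v} ≠ c {x,y,t}) := by
    by_contra hall
    push_neg at hall
    obtain ⟨v₀, h1, h2, h3, h4⟩ := exists_fifth hn x y s t
    have hst' := hall v₀ h1 h2 h3 h4
    have hste : c {x,y,s} = c {x,y,t} := (hst'.1).symm.trans hst'.2
    have valz : c {x,y,z} = c {x,y,s} := by
      by_cases hzs : z = s
      · rw [hzs]
      by_cases hzt : z = t
      · rw [hzt, hste]
      · exact (hall z hzx hzy hzs hzt).1
    have valw : c {x,y,w} = c {x,y,s} := by
      by_cases hws : w = s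
      · rw [hws]
      by_cases hwt : w = t
      · rw [hwt, hste]
      · exact (hall w hwx hwy hws hwt).1
    exact hc (valz.trans valw.symm)
  obtain ⟨v, hvx, hvy, hvs, hvt, hv⟩ := hv
  have mem_s : c {x,y,s} = c {x,y,z} ∨ c {x,y,s} = c {x,y,w} :=
    link2 hNR x y z w s hxy hzx hzy hwx hwy hsx hsy hc
  have mem_t : c {x,y,t} = c {x,y,z} ∨ c {x,y,t} = c {x,y,w} :=
    link2 hNR x y z w t hxy hzx hzy hwx hwy htx hty hc
  have mem_v : c {x,y,v} = c {x,y,z} ∨ c {x,y,v} = c {x,y,w} :=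
    link2 hNR x y z w v hxy hzx hzy hwx hwy hvx hvy hc
  rcases hv with hv1 | hv1
  · have E := L1x hNR x y s v t hxy hsx.symm hvx.symm htx.symm (Ne.symm hsy)
      hvy.symm (Ne.symm hty) hvs.symm hst hvt hv1.symm
    rcases E with hE | hE
    · rw [hE]; exact mem_s
    · rw [hE]; exact mem_v
  · have E := L1x hNR x y t v s hxy htx.symm hvx.symm hsx.symm (Ne.symm hty)
      hvy.symm (Ne.symm hsy) hvt.symm hst.symm hvs hv1.symm
    rw [show ({x,t,s} : Finset (Fin n)) = {x,s,t} from ts12 x t s] at E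
    rcases E with hE | hE
    · rw [hE]; exact mem_t
    · rw [hE]; exact mem_v

/-- Master form: any edge meeting a non-flat pair gets one of its two link colors. -/
lemma L3M (hn : 5 ≤ n) (hNR : ¬ HasRainbowTight c) (a b z w : Fin n)
    (hab : a ≠ b) (hza : z ≠ a) (hzb : z ≠ b) (hwa : w ≠ a) (hwb : w ≠ b)
    (hc : c {a,b,z} ≠ c {a,b,w}) (p q r : Fin n)
    (hpq : p ≠ q) (hpr : p ≠ r) (hqr : q ≠ r)
    (hmem : a = p ∨ a = q ∨ a = r ∨ b = p ∨ b = q ∨ b = r) :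
    c {p,q,r} = c {a,b,z} ∨ c {p,q,r} = c {a,b,w} := by
  have hc' : c {b,a,z} ≠ c {b,a,w} := by
    rw [ts01 b a z, ts01 b a w]; exact hc
  have e1 : c {b,a,z} = c {a,b,z} := congrArg c (ts01 b a z)
  have e2 : c {b,a,w} = c {a,b,w} := congrArg c (ts01 b a w)
  rcases hmem with rfl | rfl | rfl | rfl | rfl | rfl
  · exact L3 hn hNR a b z w hab hza hzb hwa hwb hc q r hpq.symm hpr.symm hqr
  · rw [ts01 p a r]
    exact L3 hn hNR a b z w hab hza hzb hwa hwb hc p r hpq hqr.symm hpr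
  · rw [trot2 p q a]
    exact L3 hn hNR a b z w hab hza hzb hwa hwb hc p q hpr hqr hpq
  · have := L3 hn hNR b a z w hab.symm hzb hza hwb hwa hc' q r hpq.symm hpr.symm hqr
    rw [e1, e2] at this; exact this
  · have := L3 hn hNR b a z w hab.symm hzb hza hwb hwa hc' p r hpq hqr.symm hpr
    rw [e1, e2] at this
    rw [ts01 p b r]
    exact this
  · have := L3 hn hNR b a z w hab.symm hzb hza hwb hwa hc' p q hpr hqr hpq
    rw [e1, e2] at this
    rw [trot2 p q b]
    exact this

/-- There is a color `B` meeting the value set of every non-flat pair. -/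
lemma exists_cover (hn : 5 ≤ n) (hNR : ¬ HasRainbowTight c) :
    ∃ B : ℕ, ∀ a b z w : Fin n, a ≠ b → z ≠ a → z ≠ b → w ≠ a → w ≠ b →
      c {a,b,z} ≠ c {a,b,w} → (B = c {a,b,z} ∨ B = c {a,b,w}) := by
  by_cases hflat : ∀ a b z w : Fin n, a ≠ b → z ≠ a → z ≠ b → w ≠ a → w ≠ b →
      c {a,b,z} = c {a,b,w}
  · exact ⟨0, fun a b z w h1 h2 h3 h4 h5 hne =>
      absurd (hflat a b z w h1 h2 h3 h4 h5) hne⟩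
  push_neg at hflat
  obtain ⟨x, y, z, w, hxy, hzx, hzy, hwx, hwy, hc⟩ := hflat
  by_cases h1 : ∀ a b z' w' : Fin n, a ≠ b → z' ≠ a → z' ≠ b → w' ≠ a → w' ≠ b →
      c {a,b,z'} ≠ c {a,b,w'} → (c {x,y,w} = c {a,b,z'} ∨ c {x,y,w} = c {a,b,w'})
  · exact ⟨_, h1⟩
  by_cases h2 : ∀ a b z' w' : Fin n, a ≠ b → z' ≠ a → z' ≠ b → w' ≠ a → w' ≠ b →
      c {a,b,z'} ≠ c {a,b,w'} → (c {x,y,z} = c {a,b,z'} ∨ c {x,y,z} = c {a,b,w'})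
  · exact ⟨_, h2⟩
  exfalso
  push_neg at h1 h2
  obtain ⟨a1, b1, z1, w1, hab1, hz1a, hz1b, hw1a, hw1b, hq1, hβ1, hβ2⟩ := h1
  obtain ⟨a2, b2, z2, w2, hab2, hz2a, hz2b, hw2a, hw2b, hq2, hα1, hα2⟩ := h2
  -- (1) {x,y,w} is disjoint from {a1,b1}
  have hno1 : ¬(a1 = x ∨ a1 = y ∨ a1 = w ∨ b1 = x ∨ b1 = y ∨ b1 = w) := by
    intro hmem
    rcases L3M hn hNR a1 b1 z1 w1 hab1 hz1a hz1b hw1a hw1b hq1 x y w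
      hxy hwx.symm hwy.symm hmem with h | h
    · exact hβ1 h
    · exact hβ2 h
  push_neg at hno1
  obtain ⟨ha1x, ha1y, ha1w, hb1x, hb1y, hb1w⟩ := hno1
  -- (1') {x,y,z} is disjoint from {a2,b2}
  have hno2 : ¬(a2 = x ∨ a2 = y ∨ a2 = z ∨ b2 = x ∨ b2 = y ∨ b2 = z) := by
    intro hmem
    rcases L3M hn hNR a2 b2 z2 w2 hab2 hz2a hz2b hw2a hw2b hq2 x y z
      hxy hzx.symm hzy.symm hmem with h | h
    · exact hα1 h
    · exact hα2 h
  push_neg at hno2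
  obtain ⟨ha2x, ha2y, ha2z, hb2x, hb2y, hb2z⟩ := hno2
  -- (2) c{x,y,z} is one of the two link colors of (a1,b1)
  have hcg1 : c {a1,b1,x} = c {a1,b1,z1} ∨ c {a1,b1,x} = c {a1,b1,w1} :=
    link2 hNR a1 b1 z1 w1 x hab1 hz1a hz1b hw1a hw1b (fun h => ha1x h.symm)
      (fun h => hb1x h.symm) hq1
  have hcg2 : c {a1,b1,x} = c {x,y,z} ∨ c {a1,b1,x} = c {x,y,w} := by
    refine L3M hn hNR x y z w hxy hzx hzy hwx hwy hc a1 b1 x hab1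
      (fun h => ha1x h) (fun h => hb1x h) ?_
    exact Or.inr (Or.inr (Or.inl rfl))
  have hα_in : c {x,y,z} = c {a1,b1,z1} ∨ c {x,y,z} = c {a1,b1,w1} := by
    rcases hcg2 with hg | hg
    · rw [← hg]; exact hcg1
    · rcases hcg1 with h' | h'
      · exact absurd (hg.symm.trans h') hβ1
      · exact absurd (hg.symm.trans h') hβ2
  -- (4) {a1,b1} disjoint from {a2,b2}
  have hcommon : ¬(a2 = a1 ∨ a2 = b1 ∨ b2 = a1 ∨ b2 = b1) := by
    intro hcom
    have m1 : a2 = a1 ∨ a2 = b1 ∨ a2 = z1 ∨ b2 = a1 ∨ b2 = b1 ∨ b2 = z1 := by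
      rcases hcom with h | h | h | h
      exacts [Or.inl h, Or.inr (Or.inl h), Or.inr (Or.inr (Or.inr (Or.inl h))),
        Or.inr (Or.inr (Or.inr (Or.inr (Or.inl h))))]
    have m2 : a2 = a1 ∨ a2 = b1 ∨ a2 = w1 ∨ b2 = a1 ∨ b2 = b1 ∨ b2 = w1 := by
      rcases hcom with h | h | h | h
      exacts [Or.inl h, Or.inr (Or.inl h), Or.inr (Or.inr (Or.inr (Or.inl h))),
        Or.inr (Or.inr (Or.inr (Or.inr (Or.inl h))))]
    have g1 := L3M hn hNR a2 b2 z2 w2 hab2 hz2a hz2b hw2a hw2b hq2 a1 b1 z1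
      hab1 hz1a.symm hz1b.symm m1
    have g2 := L3M hn hNR a2 b2 z2 w2 hab2 hz2a hz2b hw2a hw2b hq2 a1 b1 w1
      hab1 hw1a.symm hw1b.symm m2
    rcases hα_in with hin | hin
    · rcases g1 with h' | h'
      · exact hα1 (hin.trans h')
      · exact hα2 (hin.trans h')
    · rcases g2 with h' | h'
      · exact hα1 (hin.trans h')
      · exact hα2 (hin.trans h')
  push_neg at hcommon
  obtain ⟨ha2a1, ha2b1, hb2a1, hb2b1⟩ := hcommon
  -- final edge {x, a1, a2}
  have hd1 : x ≠ a1 := fun h => ha1x h.symm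
  have hd2 : x ≠ a2 := fun h => ha2x h.symm
  have hd3 : a1 ≠ a2 := fun h => ha2a1 h.symm
  have v1 := L3M hn hNR x y z w hxy hzx hzy hwx hwy hc x a1 a2 hd1 hd2 hd3
    (Or.inl rfl)
  have v2 := L3M hn hNR a1 b1 z1 w1 hab1 hz1a hz1b hw1a hw1b hq1 x a1 a2 hd1 hd2 hd3
    (Or.inr (Or.inl rfl))
  have v3 := L3M hn hNR a2 b2 z2 w2 hab2 hz2a hz2b hw2a hw2b hq2 x a1 a2 hd1 hd2 hd3
    (Or.inr (Or.inr (Or.inl rfl)))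
  rcases v1 with hv | hv
  · rcases v3 with h' | h'
    · exact hα1 (hv.symm.trans h')
    · exact hα2 (hv.symm.trans h')
  · rcases v2 with h' | h'
    · exact hβ1 (hv.symm.trans h')
    · exact hβ2 (hv.symm.trans h')

lemma third_elt {e : Finset (Fin n)} (hcard : e.card = 3) {v a : Fin n}
    (hv : v ∈ e) (ha : a ∈ e) (hva : v ≠ a) :
    ∃ b, b ≠ v ∧ b ≠ a ∧ e = {v, a, b} := by
  have hpair : ({v, a} : Finset (Fin n)) ⊆ e := by
    intro t ht
    rcases Finset.mem_insert.mp ht with rfl | ht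
    · exact hv
    · rw [Finset.mem_singleton] at ht; subst ht; exact ha
  have hp2 : ({v, a} : Finset (Fin n)).card = 2 := Finset.card_pair hva
  have h1 : (e \ {v, a}).card = 1 := by
    rw [Finset.card_sdiff_of_subset hpair, hcard, hp2]
  obtain ⟨b, hb⟩ := Finset.card_eq_one.mp h1
  have hbmem : b ∈ e \ ({v, a} : Finset (Fin n)) := hb ▸ Finset.mem_singleton_self b
  rw [Finset.mem_sdiff, Finset.mem_insert, Finset.mem_singleton] at hbmem
  refine ⟨b, fun h => hbmem.2 (Or.inl h), fun h => hbmem.2 (Or.inr h), ?_⟩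
  ext t
  simp only [Finset.mem_insert, Finset.mem_singleton]
  constructor
  · intro ht
    by_cases htv : t = v
    · exact Or.inl htv
    by_cases hta : t = a
    · exact Or.inr (Or.inl hta)
    · have : t ∈ e \ ({v, a} : Finset (Fin n)) := by
        rw [Finset.mem_sdiff]; exact ⟨ht, by simp [htv, hta]⟩
      rw [hb, Finset.mem_singleton] at this
      exact Or.inr (Or.inr this)
  · rintro (rfl | rfl | rfl)
    · exact hv
    · exact ha
    · exact hbmem.1

lemma upper_bound (hn : 5 ≤ n) (hNR : ¬ HasRainbowTight c) :
    (colorFinset c).card ≤ n / 3 + 1 := by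
  obtain ⟨B, hB⟩ := exists_cover hn hNR
  set D := (colorFinset c).erase B with hDdef
  have hch : ∀ γ : ℕ, ∃ e : Finset (Fin n), γ ∈ D → (e.card = 3 ∧ c e = γ) := by
    intro γ
    by_cases hγ : γ ∈ D
    · have hγ' : γ ∈ colorFinset c := Finset.mem_of_mem_erase hγ
      rw [colorFinset, Finset.mem_image] at hγ'
      obtain ⟨e, he, hce⟩ := hγ'
      rw [Finset.mem_powersetCard] at he
      exact ⟨e, fun _ => ⟨he.2, hce⟩⟩
    · exact ⟨∅, fun h => absurd h hγ⟩
  choose E hE using hch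
  have hdisj : ∀ γ ∈ D, ∀ δ ∈ D, γ ≠ δ → Disjoint (E γ) (E δ) := by
    intro γ hγ δ hδ hne
    obtain ⟨hcard1, hc1⟩ := hE γ hγ
    obtain ⟨hcard2, hc2⟩ := hE δ hδ
    have hγB : γ ≠ B := Finset.ne_of_mem_erase hγ
    have hδB : δ ≠ B := Finset.ne_of_mem_erase hδ
    rw [Finset.disjoint_left]
    intro v hv1 hv2
    have hEne : E γ ≠ E δ := fun h => hne (by rw [← hc1, ← hc2, h])
    obtain ⟨a, haγ, haδ⟩ := Finset.not_subset.mp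
      (fun hsub => hEne (Finset.eq_of_subset_of_card_le hsub (by rw [hcard1, hcard2])))
    obtain ⟨d, hdδ, hdγ⟩ := Finset.not_subset.mp
      (fun hsub => hEne.symm (Finset.eq_of_subset_of_card_le hsub (by rw [hcard1, hcard2])))
    have hva : v ≠ a := fun h => haδ (h ▸ hv2)
    have hvd : v ≠ d := fun h => hdγ (h ▸ hv1)
    have had : a ≠ d := fun h => hdγ (h ▸ haγ)
    obtain ⟨b, hbv, hba, hEγ⟩ := third_elt hcard1 hv1 haγ hva
    obtain ⟨e', hev, hed, hEδ⟩ := third_elt hcard2 hv2 hdδ hvd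
    have hγval : c {v, a, b} = γ := by rw [← hEγ]; exact hc1
    have hδval : c {v, d, e'} = δ := by rw [← hEδ]; exact hc2
    have hflat_va : ∀ s t : Fin n, s ≠ v → s ≠ a → t ≠ v → t ≠ a →
        c {v,a,s} = c {v,a,t} := by
      intro s t hsv hsa htv hta
      by_contra hne2
      have hBst := hB v a s t hva hsv hsa htv hta hne2
      have hγ2 : c {v,a,b} = c {v,a,s} ∨ c {v,a,b} = c {v,a,t} :=
        link2 hNR v a s t b hva hsv hsa htv hta hbv hba hne2
      have hδ2 : c {v,d,e'} = c {v,a,s} ∨ c {v,d,e'} = c {v,a,t} :=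
        L3M hn hNR v a s t hva hsv hsa htv hta hne2 v d e' hvd (fun h => hev h.symm)
          (fun h => hed h.symm) (Or.inl rfl)
      rw [hγval] at hγ2
      rw [hδval] at hδ2
      rcases hBst with h1 | h1 <;> rcases hγ2 with h2 | h2 <;> rcases hδ2 with h3 | h3 <;>
        first
          | exact hγB (h2.trans h1.symm)
          | exact hδB (h3.trans h1.symm)
          | exact hne (h2.trans h3.symm)
    have hflat_vd : ∀ s t : Fin n, s ≠ v → s ≠ d → t ≠ v → t ≠ d →
        c {v,d,s} = c {v,d,t} := by
      intro s t hsv hsd htv htd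
      by_contra hne2
      have hBst := hB v d s t hvd hsv hsd htv htd hne2
      have hδ2 : c {v,d,e'} = c {v,d,s} ∨ c {v,d,e'} = c {v,d,t} :=
        link2 hNR v d s t e' hvd hsv hsd htv htd hev hed hne2
      have hγ2 : c {v,a,b} = c {v,d,s} ∨ c {v,a,b} = c {v,d,t} :=
        L3M hn hNR v d s t hvd hsv hsd htv htd hne2 v a b hva (fun h => hbv h.symm)
          (fun h => hba h.symm) (Or.inl rfl)
      rw [hγval] at hγ2
      rw [hδval] at hδ2
      rcases hBst with h1 | h1 <;> rcases hγ2 with h2 | h2 <;> rcases hδ2 with h3 | h3 <;>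
        first
          | exact hγB (h2.trans h1.symm)
          | exact hδB (h3.trans h1.symm)
          | exact hne (h2.trans h3.symm)
    have hγd : γ = c {v,a,d} := by
      rw [← hγval]
      exact hflat_va b d hbv hba hvd.symm had.symm
    have hδa : δ = c {v,d,a} := by
      rw [← hδval]
      exact hflat_vd e' a hev hed hva.symm had
    rw [show ({v,d,a} : Finset (Fin n)) = {v,a,d} from ts12 v d a] at hδa
    exact hne (hγd.trans hδa.symm)
  have hbu : (D.biUnion E).card = ∑ γ ∈ D, (E γ).card := Finset.card_biUnion hdisj
  have hsum : ∑ γ ∈ D, (E γ).card = 3 * D.card := by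
    rw [Finset.sum_congr rfl (fun γ hγ => (hE γ hγ).1)]
    simp [mul_comm]
  have hle : (D.biUnion E).card ≤ n := by
    calc (D.biUnion E).card ≤ (Finset.univ : Finset (Fin n)).card :=
          Finset.card_le_card (Finset.subset_univ _)
      _ = n := by simp
  have hDcard : D.card ≤ n / 3 := by
    rw [Nat.le_div_iff_mul_le (by norm_num : 0 < 3)]
    omega
  have hsub : colorFinset c ⊆ insert B D := by
    intro t ht
    by_cases htB : t = B
    · exact Finset.mem_insert.mpr (Or.inl htB)
    · exact Finset.mem_insert.mpr (Or.inr (Finset.mem_erase.mpr ⟨htB, ht⟩))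
  calc (colorFinset c).card ≤ (insert B D).card := Finset.card_le_card hsub
    _ ≤ D.card + 1 := Finset.card_insert_le _ _
    _ ≤ n / 3 + 1 := by omega

def cLower (n : ℕ) : Finset (Fin n) → ℕ := fun e =>
  if ∀ x ∈ e, ∀ y ∈ e, (x : ℕ) / 3 = (y : ℕ) / 3
  then (e.sup (fun x => (x : ℕ))) / 3 + 1 else 0

lemma cLower_no_rainbow (n : ℕ) : ¬ HasRainbowTight (cLower n) := by
  rintro ⟨v, hinj, h1, h2, h3⟩
  have key : ∀ e : Finset (Fin n), v 2 ∈ e →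
      cLower n e = 0 ∨ cLower n e = ((v 2 : ℕ) / 3) + 1 := by
    intro e he
    unfold cLower
    by_cases hcond : ∀ x ∈ e, ∀ y ∈ e, (x : ℕ) / 3 = (y : ℕ) / 3
    · right
      rw [if_pos hcond]
      have hub : e.sup (fun x => (x : ℕ)) ≤ 3 * ((v 2 : ℕ) / 3) + 2 := by
        apply Finset.sup_le
        intro x hx
        have := hcond x hx (v 2) he
        omega
      have hlb : (v 2 : ℕ) ≤ e.sup (fun x => (x : ℕ)) :=
        Finset.le_sup (f := fun x : Fin n => (x : ℕ)) he
      omega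
    · left; rw [if_neg hcond]
  have m1 : v 2 ∈ ({v 0, v 1, v 2} : Finset (Fin n)) := by simp
  have m2 : v 2 ∈ ({v 1, v 2, v 3} : Finset (Fin n)) := by simp
  have m3 : v 2 ∈ ({v 2, v 3, v 4} : Finset (Fin n)) := by simp
  rcases key _ m1 with hA | hA <;> rcases key _ m2 with hB | hB <;>
    rcases key _ m3 with hC | hC
  · exact h1 (hA.trans hB.symm)
  · exact h1 (hA.trans hB.symm)
  · exact h2 (hA.trans hC.symm)
  · exact h3 (hB.trans hC.symm)
  · exact h3 (hB.trans hC.symm)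
  · exact h2 (hA.trans hC.symm)
  · exact h1 (hA.trans hB.symm)
  · exact h1 (hA.trans hB.symm)

lemma cLower_card (n : ℕ) (hn : 5 ≤ n) :
    (colorFinset (cLower n)).card = n / 3 + 1 := by
  have hset : colorFinset (cLower n) =
      insert 0 ((Finset.range (n / 3)).image (· + 1)) := by
    ext γ
    simp only [colorFinset, Finset.mem_image, Finset.mem_insert, Finset.mem_range]
    constructor
    · rintro ⟨e, he, rfl⟩
      rw [Finset.mem_powersetCard] at he
      unfold cLower
      by_cases hcond : ∀ x ∈ e, ∀ y ∈ e, (x : ℕ) / 3 = (y : ℕ) / 3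
      · right
        obtain ⟨x, y, z, hxy, hxz, hyz, rfl⟩ := Finset.card_eq_three.mp he.2
        have hx : x ∈ ({x, y, z} : Finset (Fin n)) := by simp
        have hy : y ∈ ({x, y, z} : Finset (Fin n)) := by simp
        have hz : z ∈ ({x, y, z} : Finset (Fin n)) := by simp
        have exy := hcond x hx y hy
        have exz := hcond x hx z hz
        have hvxy : (x : ℕ) ≠ (y : ℕ) := fun h => hxy (Fin.ext h)
        have hvxz : (x : ℕ) ≠ (z : ℕ) := fun h => hxz (Fin.ext h)
        have hvyz : (y : ℕ) ≠ (z : ℕ) := fun h => hyz (Fin.ext h)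
        have hxlt : (x : ℕ) < n := x.is_lt
        have hylt : (y : ℕ) < n := y.is_lt
        have hzlt : (z : ℕ) < n := z.is_lt
        rw [if_pos hcond]
        have hub : ({x, y, z} : Finset (Fin n)).sup (fun t => (t : ℕ)) ≤
            3 * ((x : ℕ) / 3) + 2 := by
          apply Finset.sup_le
          intro t ht
          have := hcond t ht x hx
          omega
        have hlb : (x : ℕ) ≤ ({x, y, z} : Finset (Fin n)).sup (fun t => (t : ℕ)) :=
          Finset.le_sup (f := fun t : Fin n => (t : ℕ)) hx
        refine ⟨(x : ℕ) / 3, by omega, by omega⟩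
      · left; rw [if_neg hcond]
    · rintro (rfl | ⟨k, hk, rfl⟩)
      · -- color 0 from edge {0, 1, 3}
        have h0 : (0 : ℕ) < n := by omega
        have h1 : (1 : ℕ) < n := by omega
        have h3 : (3 : ℕ) < n := by omega
        refine ⟨{⟨0, h0⟩, ⟨1, h1⟩, ⟨3, h3⟩}, ?_, ?_⟩
        · rw [Finset.mem_powersetCard]
          refine ⟨Finset.subset_univ _, ?_⟩
          rw [Finset.card_insert_of_notMem (by simp), Finset.card_insert_of_notMem
            (by simp), Finset.card_singleton]
        · unfold cLower
          rw [if_neg]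
          intro hcond
          have := hcond ⟨0, h0⟩ (by simp) ⟨3, h3⟩ (by simp)
          simp at this
      · -- color k+1 from edge {3k, 3k+1, 3k+2}
        have hb0 : 3 * k < n := by omega
        have hb1 : 3 * k + 1 < n := by omega
        have hb2 : 3 * k + 2 < n := by omega
        refine ⟨{⟨3 * k, hb0⟩, ⟨3 * k + 1, hb1⟩, ⟨3 * k + 2, hb2⟩}, ?_, ?_⟩
        · rw [Finset.mem_powersetCard]
          refine ⟨Finset.subset_univ _, ?_⟩
          rw [Finset.card_insert_of_notMem (by simp), Finset.card_insert_of_notMem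
            (by simp), Finset.card_singleton]
        · unfold cLower
          have hcond : ∀ x ∈ ({⟨3 * k, hb0⟩, ⟨3 * k + 1, hb1⟩, ⟨3 * k + 2, hb2⟩} :
              Finset (Fin n)), ∀ y ∈ ({⟨3 * k, hb0⟩, ⟨3 * k + 1, hb1⟩,
              ⟨3 * k + 2, hb2⟩} : Finset (Fin n)), (x : ℕ) / 3 = (y : ℕ) / 3 := by
            intro x hx y hy
            simp only [Finset.mem_insert, Finset.mem_singleton] at hx hy
            rcases hx with rfl | rfl | rfl <;> rcases hy with rfl | rfl | rfl <;>
              simp <;> omega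
          rw [if_pos hcond]
          have hub : ({⟨3 * k, hb0⟩, ⟨3 * k + 1, hb1⟩, ⟨3 * k + 2, hb2⟩} :
              Finset (Fin n)).sup (fun t => (t : ℕ)) ≤ 3 * k + 2 := by
            apply Finset.sup_le
            intro t ht
            simp only [Finset.mem_insert, Finset.mem_singleton] at ht
            rcases ht with rfl | rfl | rfl <;> simp
          have hlb : 3 * k + 2 ≤ ({⟨3 * k, hb0⟩, ⟨3 * k + 1, hb1⟩, ⟨3 * k + 2, hb2⟩} :
              Finset (Fin n)).sup (fun t => (t : ℕ)) := by
            have : (⟨3 * k + 2, hb2⟩ : Fin n) ∈ ({⟨3 * k, hb0⟩, ⟨3 * k + 1, hb1⟩,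
                ⟨3 * k + 2, hb2⟩} : Finset (Fin n)) := by simp
            exact Finset.le_sup (f := fun t : Fin n => (t : ℕ)) this
          omega
  rw [hset]
  rw [Finset.card_insert_of_notMem (by simp), Finset.card_image_of_injective _
    (fun a b h => by omega), Finset.card_range]

end AntiRamseyAux

/-- For `n ≥ 5`, `ar(n, 𝒯) = ⌊n/3⌋ + 2`. -/
theorem anti_ramsey_tight (n : ℕ) (hn : 5 ≤ n) :
    antiRamseyTight n = n / 3 + 2 := by
  have hmem : (n / 3 + 2) ∈ {k : ℕ | ∀ c : Finset (Fin n) → ℕ,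
      k ≤ (colorFinset c).card → HasRainbowTight c} := by
    intro c hc
    by_contra hNR
    have := upper_bound hn hNR
    omega
  unfold antiRamseyTight
  refine le_antisymm (Nat.sInf_le hmem) (le_csInf ⟨_, hmem⟩ ?_)
  intro m hm
  by_contra hlt
  push_neg at hlt
  have hcard := cLower_card n hn
  have := hm (cLower n) (by omega)
  exact cLower_no_rainbow n this
end

section
/- For any integer n ≥ 3, let G be an edge-colored complete 3-partite 3-uniform hypergraph K^{(3)}_{n,n,n} with partite sets V_1, V_2, V_3 that is rainbow ℳ-free and uses at least 3 colors, say |C(G)| = k ≥ 3. Then some partite set V_ℓ can be partitioned into k parts V_{ℓ,1}, V_{ℓ,2}, ..., V_{ℓ,k} such that for each i ∈ {1,...,k}, every edge containing a vertex of V_{ℓ,i} has color i. -/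
/-- An edge of the complete 3-partite 3-graph `K^{(3)}_{n,n,n}` (with partite sets
`V_ℓ = {ℓ} × Fin n` for `ℓ : Fin 3`): a 3-set with exactly one vertex in each partite set. -/
def IsTriEdge {n : ℕ} (e : Finset (Fin 3 × Fin n)) : Prop :=
  e.card = 3 ∧ e.image Prod.fst = Finset.univ

/-- The set of colors appearing on the edges of an edge-colored `K^{(3)}_{n,n,n}`. -/
def triColorFinset {n : ℕ} (c : Finset (Fin 3 × Fin n) → ℕ) : Finset ℕ :=
  ((Finset.univ : Finset (Finset (Fin 3 × Fin n))).filter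
    (fun e => e.card = 3 ∧ e.image Prod.fst = Finset.univ)).image c

/-- There is a rainbow messy path `ℳ` (edges `v₁v₂v₃, v₂v₃v₄, v₄v₅v₆`) in the
edge-colored `K^{(3)}_{n,n,n}`. -/
def HasRainbowMessyTri {n : ℕ} (c : Finset (Fin 3 × Fin n) → ℕ) : Prop :=
  ∃ v : Fin 6 → Fin 3 × Fin n, Function.Injective v ∧
    IsTriEdge {v 0, v 1, v 2} ∧ IsTriEdge {v 1, v 2, v 3} ∧ IsTriEdge {v 3, v 4, v 5} ∧
    c {v 0, v 1, v 2} ≠ c {v 1, v 2, v 3} ∧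
    c {v 0, v 1, v 2} ≠ c {v 3, v 4, v 5} ∧
    c {v 1, v 2, v 3} ≠ c {v 3, v 4, v 5}

section Core
variable {n : ℕ}

/-- Abstract rainbow-freeness condition for pairs of edges differing in the first slot. -/
def Rz (f : Fin n → Fin n → Fin n → ℕ) : Prop :=
  ∀ a a' b b' d d', a ≠ a' → b ≠ b' → d ≠ d' →
    f a b d ≠ f a' b d → f a' b' d' = f a b d ∨ f a' b' d' = f a' b d

lemma Rz.swap {f : Fin n → Fin n → Fin n → ℕ} (h : Rz f) :
    Rz (fun a d b => f a b d) := by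
  intro a a' d d' b b' ha hd hb hne
  exact h a a' b b' d d' ha hb hd hne

lemma exists_third (hn : 3 ≤ n) (u v : Fin n) : ∃ w : Fin n, w ≠ u ∧ w ≠ v := by
  have h : (({u, v} : Finset (Fin n))ᶜ).Nonempty := by
    rw [← Finset.card_pos, Finset.card_compl]
    have := Finset.card_insert_le u ({v} : Finset (Fin n))
    simp only [Finset.card_singleton, Fintype.card_fin] at *
    omega
  obtain ⟨w, hw⟩ := h
  simp only [Finset.mem_compl, Finset.mem_insert, Finset.mem_singleton, not_or] at hw
  exact ⟨w, hw⟩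

/-- The hard sublemma: if colors `x = f a b d ≠ y = f a' b d`, a third color sits at
`f α b δ` (on the line `b`, with `δ ≠ d`), and `f α b d = x`, we get a contradiction. -/
lemma HS (hn : 3 ≤ n) (f : Fin n → Fin n → Fin n → ℕ)
    (h0 : Rz f) (h1 : Rz (fun b a d => f a b d)) (h2 : Rz (fun d a b => f a b d))
    (a a' b d α δ : Fin n)
    (hxy : f a b d ≠ f a' b d) (hδ : δ ≠ d)
    (hz1 : f α b δ ≠ f a b d) (hz2 : f α b δ ≠ f a' b d)
    (hw : f α b d = f a b d) : False := by
  have haa' : a ≠ a' := fun h => hxy (by rw [h])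
  have hαa' : α ≠ a' := fun h => hxy ((h ▸ hw).symm)
  -- x ≠ z at slice α
  have hxz' : f α b d ≠ f α b δ := by rw [hw]; exact hz1.symm
  -- (★): f a bb dd ∈ {x, y} for bb ≠ b, dd ≠ d
  have star : ∀ bb dd, bb ≠ b → dd ≠ d →
      f a bb dd = f a b d ∨ f a bb dd = f a' b d := by
    intro bb dd hbb hdd
    have := h0 a' a b bb d dd haa'.symm hbb.symm hdd.symm hxy.symm
    tauto
  have star' : ∀ bb dd, bb ≠ b → dd ≠ d →
      f a' bb dd = f a b d ∨ f a' bb dd = f a' b d := by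
    intro bb dd hbb hdd
    have := h0 a a' b bb d dd haa' hbb.symm hdd.symm hxy
    tauto
  -- step 4 : f a' bb d = z for all bb ≠ b
  have step4 : ∀ bb, bb ≠ b → f a' bb d = f α b δ := by
    intro bb hbb
    -- s := f α bb δ ∈ {x, y}
    have hs : f α bb δ = f a b d ∨ f α bb δ = f a' b d := by
      have := h0 a' α b bb d δ hαa'.symm hbb.symm hδ.symm
        (by rw [hw]; exact hxy.symm)
      rcases this with h | h
      · exact Or.inr h
      · exact Or.inl (by rw [h, hw])
    have hsz : f α bb δ ≠ f α b δ := by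
      rcases hs with h | h <;> rw [h]
      · exact hz1.symm
      · exact hz2.symm
    -- step 3: s = y
    have h3 : f a' b d = f α bb δ ∨ f a' b d = f α b δ :=
      h1 bb b α a' δ d hbb hαa' hδ hsz
    have hs3 : f α bb δ = f a' b d := by
      rcases h3 with h | h
      · exact h.symm
      · exact absurd h.symm hz2
    -- step 4a: f a' bb d ∈ {z, s = y}
    have h4a : f a' bb d = f α b δ ∨ f a' bb d = f α bb δ :=
      h1 b bb α a' δ d hbb.symm hαa' hδ hsz.symm
    -- step 4b: f a' bb d ∈ {z, x} via h2 (attach through (2,d))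
    have h4b : f a' bb d = f α b δ ∨ f a' bb d = f α b d :=
      h2 δ d α a' b bb hδ hαa' hbb.symm hxz'.symm
    rcases h4a with h | h
    · exact h
    · rcases h4b with h' | h'
      · exact h'
      · exfalso; rw [hs3] at h; rw [hw] at h'; exact hxy (h'.symm.trans h)
  -- step 5 : f a bb dd = y for all bb ≠ b, dd ≠ d
  have step5 : ∀ bb dd, bb ≠ b → dd ≠ d → f a bb dd = f a' b d := by
    intro bb dd hbb hdd
    have h4 := step4 bb hbb
    have hyz : f a' b d ≠ f a' bb d := by rw [h4]; exact hz2.symm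
    have h5 : f a bb dd = f a' b d ∨ f a bb dd = f a' bb d :=
      h1 b bb a' a d dd hbb.symm haa'.symm hdd.symm hyz
    rcases h5 with h | h
    · exact h
    · rw [h4] at h
      rcases star bb dd hbb hdd with h' | h'
      · exact absurd (h.symm.trans h') hz1
      · exact absurd (h.symm.trans h') hz2
  -- step 6
  obtain ⟨b₃, hb₃b, -⟩ := exists_third hn b b
  obtain ⟨b₄, hb₄b, hb₄b₃⟩ := exists_third hn b b₃
  have h4 := step4 b₃ hb₃b
  have hzt : f a' b₃ d ≠ f a' b₃ δ := by
    rw [h4]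
    rcases star' b₃ δ hb₃b hδ with h | h <;> rw [h]
    · exact hz1
    · exact hz2
  -- t = x : attach through (2,d) at pair (δ,d) on line (a', b₃)
  have h6 : f a b d = f a' b₃ δ ∨ f a b d = f a' b₃ d :=
    h2 δ d a' a b₃ b hδ haa'.symm hb₃b hzt.symm
  have ht : f a' b₃ δ = f a b d := by
    rcases h6 with h | h
    · exact h.symm
    · rw [h4] at h; exact absurd h.symm hz1
  -- final: f a b₄ δ ∈ {z, t = x}, but = y by step 5
  have h7 : f a b₄ δ = f a' b₃ d ∨ f a b₄ δ = f a' b₃ δ :=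
    h2 d δ a' a b₃ b₄ hδ.symm haa'.symm hb₄b₃.symm hzt
  have h8 := step5 b₄ δ hb₄b hδ
  rcases h7 with h | h
  · rw [h4] at h; exact hz2 (h.symm.trans h8)
  · rw [ht] at h; exact hxy (h.symm.trans h8)

/-- If a third color sits at `f α b δ` on the line `(·, b, ·)`,
then `f α b d` already equals it. -/
lemma line_case (hn : 3 ≤ n) (f : Fin n → Fin n → Fin n → ℕ)
    (h0 : Rz f) (h1 : Rz (fun b a d => f a b d)) (h2 : Rz (fun d a b => f a b d))
    (a a' b d α δ : Fin n)
    (hxy : f a b d ≠ f a' b d) (hδ : δ ≠ d)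
    (hz1 : f α b δ ≠ f a b d) (hz2 : f α b δ ≠ f a' b d) :
    f α b d = f α b δ := by
  by_contra hw'
  have haa' : a ≠ a' := fun h => hxy (by rw [h])
  have hmem : f α b d = f a b d ∨ f α b d = f a' b d := by
    by_cases hαa : α = a
    · exact Or.inl (by rw [hαa])
    · obtain ⟨b₃, hb₃b, -⟩ := exists_third hn b b
      have hA : f a b₃ δ = f α b d ∨ f a b₃ δ = f α b δ :=
        h2 d δ α a b b₃ hδ.symm hαa hb₃b.symm hw'
      have hB : f a b₃ δ = f a' b d ∨ f a b₃ δ = f a b d :=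
        h0 a' a b b₃ d δ haa'.symm hb₃b.symm hδ.symm hxy.symm
      rcases hA with h | h
      · rcases hB with h' | h'
        · exact Or.inr (h.symm.trans h')
        · exact Or.inl (h.symm.trans h')
      · rcases hB with h' | h'
        · exact absurd (h.symm.trans h') hz2
        · exact absurd (h.symm.trans h') hz1
  rcases hmem with h | h
  · exact HS hn f h0 h1 h2 a a' b d α δ hxy hδ hz1 hz2 h
  · exact HS hn f h0 h1 h2 a' a b d α δ hxy.symm hδ hz2 hz1 h

/-- Claim A: any third color also appears at `f α b d` on the base line. -/
lemma claimA (hn : 3 ≤ n) (f : Fin n → Fin n → Fin n → ℕ)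
    (h0 : Rz f) (h1 : Rz (fun b a d => f a b d)) (h2 : Rz (fun d a b => f a b d))
    (a a' b d α β δ : Fin n)
    (hxy : f a b d ≠ f a' b d)
    (hz1 : f α β δ ≠ f a b d) (hz2 : f α β δ ≠ f a' b d) :
    f α b d = f α β δ := by
  have haa' : a ≠ a' := fun h => hxy (by rw [h])
  by_cases hβ : β = b <;> by_cases hδ : δ = d
  · rw [hβ, hδ]
  · rw [hβ] at hz1 hz2 ⊢
    exact line_case hn f h0 h1 h2 a a' b d α δ hxy hδ hz1 hz2
  · rw [hδ] at hz1 hz2 ⊢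
    exact line_case hn (fun a d b => f a b d) h0.swap h2 h1 a a' d b α β hxy hβ hz1 hz2
  · -- region case
    by_cases hw1 : f α b d = f a b d
    · exfalso
      have hαa' : α ≠ a' := fun h => hxy ((h ▸ hw1).symm)
      have := h0 a' α b β d δ hαa'.symm (fun h => hβ h.symm) (fun h => hδ h.symm)
        (by rw [hw1]; exact hxy.symm)
      rcases this with h | h
      · exact hz2 h
      · rw [hw1] at h; exact hz1 h
    · by_cases hw2 : f α b d = f a' b d
      · exfalso
        have hαa : α ≠ a := fun h => hxy (h ▸ hw2)
        have := h0 a α b β d δ hαa.symm (fun h => hβ h.symm) (fun h => hδ h.symm)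
          (by rw [hw2]; exact hxy)
        rcases this with h | h
        · exact hz1 h
        · rw [hw2] at h; exact hz2 h
      · have hαa : α ≠ a := fun h => hw1 (by rw [h])
        have := h0 a α b β d δ hαa.symm (fun h => hβ h.symm) (fun h => hδ h.symm)
          (fun h => hw1 h.symm)
        rcases this with h | h
        · exact absurd h hz1
        · exact h.symm

lemma two_pins (f : Fin n → Fin n → Fin n → ℕ) (h0 : Rz f)
    (b d u v α₀ b' d' : Fin n)
    (hu : f u b d ≠ f α₀ b d) (hv : f v b d ≠ f α₀ b d)
    (huv : f u b d ≠ f v b d) (hb' : b' ≠ b) (hd' : d' ≠ d) :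
    f α₀ b' d' = f α₀ b d := by
  have huα : u ≠ α₀ := fun h => hu (by rw [h])
  have hvα : v ≠ α₀ := fun h => hv (by rw [h])
  have hA := h0 u α₀ b b' d d' huα hb'.symm hd'.symm hu
  have hB := h0 v α₀ b b' d d' hvα hb'.symm hd'.symm hv
  rcases hA with h | h
  · rcases hB with h' | h'
    · exact absurd (h.symm.trans h') huv
    · exact h'
  · exact h

/-- Three pairwise distinct colors on the line `(·, b, d)` pin every slice:
`f α₀` is constant on the region off the lines through `(b, d)`. -/
lemma L1 (f : Fin n → Fin n → Fin n → ℕ) (h0 : Rz f)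
    (b d a₁ a₂ a₃ : Fin n)
    (h12 : f a₁ b d ≠ f a₂ b d) (h13 : f a₁ b d ≠ f a₃ b d)
    (h23 : f a₂ b d ≠ f a₃ b d)
    (α₀ b' d' : Fin n) (hb' : b' ≠ b) (hd' : d' ≠ d) :
    f α₀ b' d' = f α₀ b d := by
  by_cases e1 : f a₁ b d = f α₀ b d
  · exact two_pins f h0 b d a₂ a₃ α₀ b' d'
      (by rw [← e1]; exact h12.symm) (by rw [← e1]; exact h13.symm) h23 hb' hd'
  · by_cases e2 : f a₂ b d = f α₀ b d
    · exact two_pins f h0 b d a₁ a₃ α₀ b' d'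
        e1 (by rw [← e2]; exact h23.symm) h13 hb' hd'
    · exact two_pins f h0 b d a₁ a₂ α₀ b' d' e1 e2 h12 hb' hd'

/-- Core lemma: influence in coordinate 0 plus a third color forces the color
to depend only on coordinate 0. -/
lemma core (hn : 3 ≤ n) (f : Fin n → Fin n → Fin n → ℕ)
    (h0 : Rz f) (h1 : Rz (fun b a d => f a b d)) (h2 : Rz (fun d a b => f a b d))
    (a a' b d α β δ : Fin n)
    (hxy : f a b d ≠ f a' b d)
    (hz1 : f α β δ ≠ f a b d) (hz2 : f α β δ ≠ f a' b d) :
    ∀ a₀ b₁ d₁ b₂ d₂, f a₀ b₁ d₁ = f a₀ b₂ d₂ := by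
  have hA : f α b d = f α β δ := claimA hn f h0 h1 h2 a a' b d α β δ hxy hz1 hz2
  have h13 : f a b d ≠ f α b d := by rw [hA]; exact fun h => hz1 h.symm
  have h23 : f a' b d ≠ f α b d := by rw [hA]; exact fun h => hz2 h.symm
  have key : ∀ a₀ b₁ d₁, f a₀ b₁ d₁ = f a₀ b d := by
    intro a₀ b₁ d₁
    by_cases hb₁ : b₁ = b <;> by_cases hd₁ : d₁ = d
    · rw [hb₁, hd₁]
    · rw [hb₁]
      obtain ⟨bs, hbsb, -⟩ := exists_third hn b b
      obtain ⟨ds, hdsd, hdsd₁⟩ := exists_third hn d d₁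
      have ha1 : f a bs ds = f a b d := L1 f h0 b d a a' α hxy h13 h23 a bs ds hbsb hdsd
      have ha2 : f a' bs ds = f a' b d := L1 f h0 b d a a' α hxy h13 h23 a' bs ds hbsb hdsd
      have ha3 : f α bs ds = f α b d := L1 f h0 b d a a' α hxy h13 h23 α bs ds hbsb hdsd
      have k12 : f a bs ds ≠ f a' bs ds := by rw [ha1, ha2]; exact hxy
      have k13 : f a bs ds ≠ f α bs ds := by rw [ha1, ha3]; exact h13
      have k23 : f a' bs ds ≠ f α bs ds := by rw [ha2, ha3]; exact h23
      calc f a₀ b d₁ = f a₀ bs ds :=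
            L1 f h0 bs ds a a' α k12 k13 k23 a₀ b d₁ hbsb.symm (fun h => hdsd₁ h.symm)
        _ = f a₀ b d := L1 f h0 b d a a' α hxy h13 h23 a₀ bs ds hbsb hdsd
    · rw [hd₁]
      obtain ⟨bs, hbsb, hbsb₁⟩ := exists_third hn b b₁
      obtain ⟨ds, hdsd, -⟩ := exists_third hn d d
      have ha1 : f a bs ds = f a b d := L1 f h0 b d a a' α hxy h13 h23 a bs ds hbsb hdsd
      have ha2 : f a' bs ds = f a' b d := L1 f h0 b d a a' α hxy h13 h23 a' bs ds hbsb hdsd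
      have ha3 : f α bs ds = f α b d := L1 f h0 b d a a' α hxy h13 h23 α bs ds hbsb hdsd
      have k12 : f a bs ds ≠ f a' bs ds := by rw [ha1, ha2]; exact hxy
      have k13 : f a bs ds ≠ f α bs ds := by rw [ha1, ha3]; exact h13
      have k23 : f a' bs ds ≠ f α bs ds := by rw [ha2, ha3]; exact h23
      calc f a₀ b₁ d = f a₀ bs ds :=
            L1 f h0 bs ds a a' α k12 k13 k23 a₀ b₁ d (fun h => hbsb₁ h.symm) hdsd.symm
        _ = f a₀ b d := L1 f h0 b d a a' α hxy h13 h23 a₀ bs ds hbsb hdsd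
    · exact L1 f h0 b d a a' α hxy h13 h23 a₀ b₁ d₁ hb₁ hd₁
  intro a₀ b₁ d₁ b₂ d₂
  rw [key a₀ b₁ d₁, key a₀ b₂ d₂]

end Core

section Glue
variable {n : ℕ}

/-- The edge with vertices `a, b, d` in parts 0, 1, 2. -/
def triE (a b d : Fin n) : Finset (Fin 3 × Fin n) :=
  {(0, a), (1, b), (2, d)}

lemma isTriEdge_triE (a b d : Fin n) : IsTriEdge (triE a b d) := by
  constructor
  · rw [triE, Finset.card_insert_of_notMem (by simp), Finset.card_insert_of_notMem (by simp)]
    simp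
  · rw [triE]
    ext x
    simp only [Finset.image_insert, Finset.image_singleton, Finset.mem_insert,
      Finset.mem_singleton, Finset.mem_univ, iff_true]
    fin_cases x <;> simp

lemma triEdge_eq {e : Finset (Fin 3 × Fin n)} (he : IsTriEdge e) :
    ∃ a b d, e = triE a b d := by
  obtain ⟨hcard, himg⟩ := he
  have h0 : (0 : Fin 3) ∈ e.image Prod.fst := by rw [himg]; exact Finset.mem_univ _
  have h1 : (1 : Fin 3) ∈ e.image Prod.fst := by rw [himg]; exact Finset.mem_univ _
  have h2 : (2 : Fin 3) ∈ e.image Prod.fst := by rw [himg]; exact Finset.mem_univ _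
  simp only [Finset.mem_image] at h0 h1 h2
  obtain ⟨p0, hp0, hp0'⟩ := h0
  obtain ⟨p1, hp1, hp1'⟩ := h1
  obtain ⟨p2, hp2, hp2'⟩ := h2
  refine ⟨p0.2, p1.2, p2.2, ?_⟩
  have he0 : p0 = (0, p0.2) := by rw [← hp0']
  have he1 : p1 = (1, p1.2) := by rw [← hp1']
  have he2 : p2 = (2, p2.2) := by rw [← hp2']
  have hsub : triE p0.2 p1.2 p2.2 ⊆ e := by
    intro x hx
    rw [triE] at hx
    simp only [Finset.mem_insert, Finset.mem_singleton] at hx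
    rcases hx with rfl | rfl | rfl
    · rwa [← he0]
    · rwa [← he1]
    · rwa [← he2]
  have hc : e.card ≤ (triE p0.2 p1.2 p2.2).card := by
    rw [hcard, (isTriEdge_triE p0.2 p1.2 p2.2).1]
  exact ((Finset.eq_of_subset_of_card_le hsub hc)).symm

lemma inj6' {γ : Type*} (p0 p1 p2 p3 p4 p5 : γ)
    (h01 : p0 ≠ p1) (h02 : p0 ≠ p2) (h03 : p0 ≠ p3) (h04 : p0 ≠ p4) (h05 : p0 ≠ p5)
    (h12 : p1 ≠ p2) (h13 : p1 ≠ p3) (h14 : p1 ≠ p4) (h15 : p1 ≠ p5)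
    (h23 : p2 ≠ p3) (h24 : p2 ≠ p4) (h25 : p2 ≠ p5)
    (h34 : p3 ≠ p4) (h35 : p3 ≠ p5) (h45 : p4 ≠ p5) :
    Function.Injective ![p0, p1, p2, p3, p4, p5] := by
  rw [← List.nodup_ofFn]
  simp [List.ofFn_succ]
  tauto

lemma perm3a (a b d : Fin n) :
    ({(1, b), (0, a), (2, d)} : Finset (Fin 3 × Fin n)) = triE a b d := by
  rw [triE]; ext x; simp only [Finset.mem_insert, Finset.mem_singleton]; tauto

lemma perm3b (a b d : Fin n) :
    ({(0, a), (2, d), (1, b)} : Finset (Fin 3 × Fin n)) = triE a b d := by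
  rw [triE]; ext x; simp only [Finset.mem_insert, Finset.mem_singleton]; tauto

lemma perm3c (a b d : Fin n) :
    ({(2, d), (0, a), (1, b)} : Finset (Fin 3 × Fin n)) = triE a b d := by
  rw [triE]; ext x; simp only [Finset.mem_insert, Finset.mem_singleton]; tauto

lemma perm3e (a b d : Fin n) :
    ({(1, b), (2, d), (0, a)} : Finset (Fin 3 × Fin n)) = triE a b d := by
  rw [triE]; ext x; simp only [Finset.mem_insert, Finset.mem_singleton]; tauto

variable (c : Finset (Fin 3 × Fin n) → ℕ) (hfree : ¬ HasRainbowMessyTri c)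
include hfree

lemma hR0 : Rz (fun a b d => c (triE a b d)) := by
  intro a a' b b' d d' ha hb hd hne
  by_contra hcon
  push_neg at hcon
  obtain ⟨h1, h2⟩ := hcon
  apply hfree
  refine ⟨![(0,a),(1,b),(2,d),(0,a'),(1,b'),(2,d')], ?_, ?_⟩
  · exact inj6' _ _ _ _ _ _ (by simp) (by simp) (by simp [ha]) (by simp) (by simp)
      (by simp) (by simp) (by simp [hb]) (by simp) (by simp) (by simp) (by simp [hd])
      (by simp) (by simp) (by simp)
  · have e1 : ({![(0,a),(1,b),(2,d),(0,a'),(1,b'),(2,d')] 0,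
        ![(0,a),(1,b),(2,d),(0,a'),(1,b'),(2,d')] 1,
        ![(0,a),(1,b),(2,d),(0,a'),(1,b'),(2,d')] 2} : Finset (Fin 3 × Fin n))
        = triE a b d := rfl
    have e2 : ({![(0,a),(1,b),(2,d),(0,a'),(1,b'),(2,d')] 1,
        ![(0,a),(1,b),(2,d),(0,a'),(1,b'),(2,d')] 2,
        ![(0,a),(1,b),(2,d),(0,a'),(1,b'),(2,d')] 3} : Finset (Fin 3 × Fin n))
        = triE a' b d := perm3e a' b d
    have e3 : ({![(0,a),(1,b),(2,d),(0,a'),(1,b'),(2,d')] 3,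
        ![(0,a),(1,b),(2,d),(0,a'),(1,b'),(2,d')] 4,
        ![(0,a),(1,b),(2,d),(0,a'),(1,b'),(2,d')] 5} : Finset (Fin 3 × Fin n))
        = triE a' b' d' := rfl
    rw [e1, e2, e3]
    exact ⟨isTriEdge_triE a b d, isTriEdge_triE a' b d, isTriEdge_triE a' b' d',
      hne, fun h => h1 h.symm, fun h => h2 h.symm⟩

lemma hR1 : Rz (fun b a d => c (triE a b d)) := by
  intro b b' a a' d d' hb ha hd hne
  by_contra hcon
  push_neg at hcon
  obtain ⟨h1, h2⟩ := hcon
  apply hfree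
  refine ⟨![(1,b),(0,a),(2,d),(1,b'),(0,a'),(2,d')], ?_, ?_⟩
  · exact inj6' _ _ _ _ _ _ (by simp) (by simp) (by simp [hb]) (by simp) (by simp)
      (by simp) (by simp) (by simp [ha]) (by simp) (by simp) (by simp) (by simp [hd])
      (by simp) (by simp) (by simp)
  · have e1 : ({![(1,b),(0,a),(2,d),(1,b'),(0,a'),(2,d')] 0,
        ![(1,b),(0,a),(2,d),(1,b'),(0,a'),(2,d')] 1,
        ![(1,b),(0,a),(2,d),(1,b'),(0,a'),(2,d')] 2} : Finset (Fin 3 × Fin n))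
        = triE a b d := perm3a a b d
    have e2 : ({![(1,b),(0,a),(2,d),(1,b'),(0,a'),(2,d')] 1,
        ![(1,b),(0,a),(2,d),(1,b'),(0,a'),(2,d')] 2,
        ![(1,b),(0,a),(2,d),(1,b'),(0,a'),(2,d')] 3} : Finset (Fin 3 × Fin n))
        = triE a b' d := perm3b a b' d
    have e3 : ({![(1,b),(0,a),(2,d),(1,b'),(0,a'),(2,d')] 3,
        ![(1,b),(0,a),(2,d),(1,b'),(0,a'),(2,d')] 4,
        ![(1,b),(0,a),(2,d),(1,b'),(0,a'),(2,d')] 5} : Finset (Fin 3 × Fin n))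
        = triE a' b' d' := perm3a a' b' d'
    rw [e1, e2, e3]
    exact ⟨isTriEdge_triE a b d, isTriEdge_triE a b' d, isTriEdge_triE a' b' d',
      hne, fun h => h1 h.symm, fun h => h2 h.symm⟩

lemma hR2 : Rz (fun d a b => c (triE a b d)) := by
  intro d d' a a' b b' hd ha hb hne
  by_contra hcon
  push_neg at hcon
  obtain ⟨h1, h2⟩ := hcon
  apply hfree
  refine ⟨![(2,d),(0,a),(1,b),(2,d'),(0,a'),(1,b')], ?_, ?_⟩
  · exact inj6' _ _ _ _ _ _ (by simp) (by simp) (by simp [hd]) (by simp) (by simp)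
      (by simp) (by simp) (by simp [ha]) (by simp) (by simp) (by simp) (by simp [hb])
      (by simp) (by simp) (by simp)
  · have e1 : ({![(2,d),(0,a),(1,b),(2,d'),(0,a'),(1,b')] 0,
        ![(2,d),(0,a),(1,b),(2,d'),(0,a'),(1,b')] 1,
        ![(2,d),(0,a),(1,b),(2,d'),(0,a'),(1,b')] 2} : Finset (Fin 3 × Fin n))
        = triE a b d := perm3c a b d
    have e2 : ({![(2,d),(0,a),(1,b),(2,d'),(0,a'),(1,b')] 1,
        ![(2,d),(0,a),(1,b),(2,d'),(0,a'),(1,b')] 2,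
        ![(2,d),(0,a),(1,b),(2,d'),(0,a'),(1,b')] 3} : Finset (Fin 3 × Fin n))
        = triE a b d' := rfl
    have e3 : ({![(2,d),(0,a),(1,b),(2,d'),(0,a'),(1,b')] 3,
        ![(2,d),(0,a),(1,b),(2,d'),(0,a'),(1,b')] 4,
        ![(2,d),(0,a),(1,b),(2,d'),(0,a'),(1,b')] 5} : Finset (Fin 3 × Fin n))
        = triE a' b' d' := perm3c a' b' d'
    rw [e1, e2, e3]
    exact ⟨isTriEdge_triE a b d, isTriEdge_triE a b d', isTriEdge_triE a' b' d',
      hne, fun h => h1 h.symm, fun h => h2 h.symm⟩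

end Glue

/-- For `n ≥ 3`, in a rainbow-`ℳ`-free edge-coloring of `K^{(3)}_{n,n,n}` with at least
3 colors, some partite set `V_ℓ` can be partitioned into `|C(G)|` parts (the fibers of `g`)
such that all edges containing a fixed vertex of `V_ℓ` receive the color `g` of that vertex. -/
theorem messy_path_structure_tripartite (n : ℕ) (hn : 3 ≤ n)
    (c : Finset (Fin 3 × Fin n) → ℕ) (hfree : ¬ HasRainbowMessyTri c)
    (hcol : 3 ≤ (triColorFinset c).card) :
    ∃ ℓ : Fin 3, ∃ g : Fin n → ℕ,
      ∀ e : Finset (Fin 3 × Fin n), IsTriEdge e →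
        ∀ w : Fin n, (ℓ, w) ∈ e → c e = g w := by
  have h0 := hR0 c hfree
  have h1 := hR1 c hfree
  have h2 := hR2 c hfree
  have getE : ∀ x ∈ triColorFinset c, ∃ A B D, c (triE A B D) = x := by
    intro x hx
    simp only [triColorFinset, Finset.mem_image, Finset.mem_filter] at hx
    obtain ⟨e, ⟨-, hcard, himg⟩, hce⟩ := hx
    obtain ⟨A, B, D, rfl⟩ := triEdge_eq ⟨hcard, himg⟩
    exact ⟨A, B, D, hce⟩
  obtain ⟨p, hp, q, hq, r, hr, hpq, hpr, hqr⟩ :=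
    Finset.two_lt_card.mp (by omega : 2 < (triColorFinset c).card)
  obtain ⟨Ap, Bp, Dp, hep⟩ := getE p hp
  obtain ⟨Aq, Bq, Dq, heq⟩ := getE q hq
  obtain ⟨Ar, Br, Dr, her⟩ := getE r hr
  -- generic pigeonhole: given two colors x ≠ y, one of p, q, r avoids both
  have pigeon : ∀ x y : ℕ, ∃ A B D,
      c (triE A B D) ≠ x ∧ c (triE A B D) ≠ y := by
    intro x y
    by_cases h1p : p ≠ x ∧ p ≠ y
    · exact ⟨Ap, Bp, Dp, by rw [hep]; exact h1p.1, by rw [hep]; exact h1p.2⟩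
    · by_cases h1q : q ≠ x ∧ q ≠ y
      · exact ⟨Aq, Bq, Dq, by rw [heq]; exact h1q.1, by rw [heq]; exact h1q.2⟩
      · by_cases h1r : r ≠ x ∧ r ≠ y
        · exact ⟨Ar, Br, Dr, by rw [her]; exact h1r.1, by rw [her]; exact h1r.2⟩
        · exfalso
          push_neg at h1p h1q h1r
          by_cases hpx : p = x <;> by_cases hqx : q = x <;> by_cases hrx : r = x <;>
            simp_all
  have z0 : Fin n := ⟨0, by omega⟩
  by_cases hI0 : ∃ a a' b d, c (triE a b d) ≠ c (triE a' b d)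
  · obtain ⟨a, a', b, d, hne⟩ := hI0
    obtain ⟨A, B, D, hz1, hz2⟩ := pigeon (c (triE a b d)) (c (triE a' b d))
    have concl := core hn (fun a b d => c (triE a b d)) h0 h1 h2
      a a' b d A B D hne hz1 hz2
    refine ⟨0, fun w => c (triE w z0 z0), ?_⟩
    intro e he w hw
    obtain ⟨A', B', D', rfl⟩ := triEdge_eq he
    have hwA : w = A' := by
      rw [triE] at hw
      simp only [Finset.mem_insert, Finset.mem_singleton, Prod.mk.injEq] at hw
      rcases hw with ⟨-, h⟩ | ⟨h, -⟩ | ⟨h, -⟩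
      · exact h
      · exact absurd h (by decide)
      · exact absurd h (by decide)
    rw [hwA]
    exact concl A' B' D' z0 z0
  · push_neg at hI0
    by_cases hI1 : ∃ b b' a d, c (triE a b d) ≠ c (triE a b' d)
    · obtain ⟨b, b', a, d, hne⟩ := hI1
      obtain ⟨A, B, D, hz1, hz2⟩ := pigeon (c (triE a b d)) (c (triE a b' d))
      have concl := core hn (fun b a d => c (triE a b d)) h1 h0 (Rz.swap h2)
        b b' a d B A D hne hz1 hz2
      refine ⟨1, fun w => c (triE z0 w z0), ?_⟩
      intro e he w hw
      obtain ⟨A', B', D', rfl⟩ := triEdge_eq he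
      have hwB : w = B' := by
        rw [triE] at hw
        simp only [Finset.mem_insert, Finset.mem_singleton, Prod.mk.injEq] at hw
        rcases hw with ⟨h, -⟩ | ⟨-, h⟩ | ⟨h, -⟩
        · exact absurd h (by decide)
        · exact h
        · exact absurd h (by decide)
      rw [hwB]
      exact concl B' A' D' z0 z0
    · by_cases hI2 : ∃ d d' a b, c (triE a b d) ≠ c (triE a b d')
      · obtain ⟨d, d', a, b, hne⟩ := hI2
        obtain ⟨A, B, D, hz1, hz2⟩ := pigeon (c (triE a b d)) (c (triE a b d'))
        have concl := core hn (fun d a b => c (triE a b d)) h2 (Rz.swap h0) (Rz.swap h1)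
          d d' a b D A B hne hz1 hz2
        refine ⟨2, fun w => c (triE z0 z0 w), ?_⟩
        intro e he w hw
        obtain ⟨A', B', D', rfl⟩ := triEdge_eq he
        have hwD : w = D' := by
          rw [triE] at hw
          simp only [Finset.mem_insert, Finset.mem_singleton, Prod.mk.injEq] at hw
          rcases hw with ⟨h, -⟩ | ⟨h, -⟩ | ⟨-, h⟩
          · exact absurd h (by decide)
          · exact absurd h (by decide)
          · exact h
        rw [hwD]
        exact concl D' A' B' z0 z0
      · exfalso
        push_neg at hI1 hI2
        have hconst : ∀ A B D, c (triE A B D) = c (triE z0 z0 z0) := by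
          intro A B D
          calc c (triE A B D) = c (triE z0 B D) := hI0 A z0 B D
            _ = c (triE z0 z0 D) := hI1 B z0 z0 D
            _ = c (triE z0 z0 z0) := hI2 D z0 z0 z0
        have hsub : triColorFinset c ⊆ {c (triE z0 z0 z0)} := by
          intro x hx
          obtain ⟨A, B, D, hx'⟩ := getE x hx
          rw [Finset.mem_singleton, ← hx', hconst]
        have := Finset.card_le_card hsub
        simp only [Finset.card_singleton] at this
        omega
end

section
/- For every 3-partite 3-uniform hypergraph H with R'_2(H) ≥ t(H) + 1, the 3-partite constrained Ramsey number satisfies f'(H, ℒ) = R'_2(H), where t(H) is the minimum integer t such that H is a subgraph of K^{(3)}_{t,t,t}. -/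
/-- A 3-partite 3-uniform hypergraph, with partite sets `{ℓ} × Fin m` for `ℓ : Fin 3`. -/
structure TriGraph where
  m : ℕ
  edges : Finset (Finset (Fin 3 × Fin m))
  isTri : ∀ e ∈ edges, IsTriEdge e

/-- `H` is (isomorphic to) a subgraph of `K^{(3)}_{N,N,N}`. -/
def TriGraph.HasCopy (H : TriGraph) (N : ℕ) : Prop :=
  ∃ f : Fin 3 × Fin H.m → Fin 3 × Fin N, Function.Injective f ∧
    ∀ e ∈ H.edges, IsTriEdge (e.image f)

/-- `t(H)`: the minimum `t` such that `H ⊆ K^{(3)}_{t,t,t}`. -/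
noncomputable def tOf (H : TriGraph) : ℕ := sInf {t : ℕ | H.HasCopy t}

/-- The edge-coloring `c` of `K^{(3)}_{N,N,N}` contains a monochromatic copy of `H`. -/
def TriGraph.HasMonoCopy {N : ℕ} {α : Type*} (H : TriGraph)
    (c : Finset (Fin 3 × Fin N) → α) : Prop :=
  ∃ f : Fin 3 × Fin H.m → Fin 3 × Fin N, Function.Injective f ∧
    (∀ e ∈ H.edges, IsTriEdge (e.image f)) ∧
    ∃ a : α, ∀ e ∈ H.edges, c (e.image f) = a

/-- There is a rainbow loose path `ℒ` in the edge-colored `K^{(3)}_{n,n,n}`. -/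
def HasRainbowLooseTri {n : ℕ} (c : Finset (Fin 3 × Fin n) → ℕ) : Prop :=
  ∃ v : Fin 7 → Fin 3 × Fin n, Function.Injective v ∧
    IsTriEdge {v 0, v 1, v 2} ∧ IsTriEdge {v 2, v 3, v 4} ∧ IsTriEdge {v 4, v 5, v 6} ∧
    c {v 0, v 1, v 2} ≠ c {v 2, v 3, v 4} ∧
    c {v 0, v 1, v 2} ≠ c {v 4, v 5, v 6} ∧
    c {v 2, v 3, v 4} ≠ c {v 4, v 5, v 6}

/-- The 2-colored 3-partite Ramsey number `R'₂(H)`. -/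
noncomputable def ramseyTwoTri (H : TriGraph) : ℕ :=
  sInf {N : ℕ | ∀ c : Finset (Fin 3 × Fin N) → Fin 2, H.HasMonoCopy c}

/-- The 3-partite constrained Ramsey number `f'(H, ℒ)`. -/
noncomputable def constrainedRamseyLooseTri (H : TriGraph) : ℕ :=
  sInf {N : ℕ | ∀ c : Finset (Fin 3 × Fin N) → ℕ, H.HasMonoCopy c ∨ HasRainbowLooseTri c}

/-!
Lower bound: a 2-coloring has no rainbow `ℒ`, so `f'(H, ℒ) ≥ R'₂(H)`.

Upper bound: `t(H)` is the size `m` of the parts of `H`, and `m ≥ 2`, since otherwise `H` has at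
most one edge and `R'₂(H) ≤ m`. Let `N = R'₂(H) ≥ m + 1`. A coloring of `K^{(3)}_{N,N,N}` with at
most two colors contains a monochromatic `H` by the definition of `R'₂`. For a coloring with at
least three colors and no rainbow `ℒ`, the key fact is: if `A`, `B` are disjoint edges of different
colors, then every edge of a third color shares two vertices with `A` or with `B`. From this one
finds an edge `u` such that all edges disjoint from `u` have the same color. They form a
`K^{(3)}_{N-1,N-1,N-1}`, which contains `H` because `N - 1 ≥ m`.
-/

open Finset

namespace Tripartite

variable {N : ℕ} {α : Type*}

/- An edge of `K^{(3)}_{N,N,N}` is encoded by `E : Fin 3 → Fin N`, its vertex in part `i` being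
`(i, E i)`. Two edges are `Apart` if they share no vertex, `Near` if they share at least two,
and `MeetsOnlyAt E F p` says that they share exactly their vertex in part `p`. -/

def edgeOf (E : Fin 3 → Fin N) : Finset (Fin 3 × Fin N) :=
  univ.image fun i => (i, E i)

def Apart (E F : Fin 3 → Fin N) : Prop := ∀ i, E i ≠ F i

def Near (E F : Fin 3 → Fin N) : Prop := ∃ i j, i ≠ j ∧ E i = F i ∧ E j = F j

def MeetsOnlyAt (E F : Fin 3 → Fin N) (p : Fin 3) : Prop := ∀ i, E i = F i ↔ i = p

/-- The loose paths `A, M, B` of the coloring `χ` are not rainbow. -/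
def NoRainbowPath (χ : (Fin 3 → Fin N) → α) : Prop :=
  ∀ ⦃A M B : Fin 3 → Fin N⦄ ⦃p q : Fin 3⦄, Apart A B → MeetsOnlyAt M A p →
    MeetsOnlyAt M B q → χ M = χ A ∨ χ M = χ B ∨ χ A = χ B

section Edges

variable {E F G : Fin 3 → Fin N}

lemma mem_edgeOf {x : Fin 3 × Fin N} : x ∈ edgeOf E ↔ E x.1 = x.2 := by
  simp [edgeOf, Prod.ext_iff, eq_comm]

lemma isTriEdge_edgeOf (E : Fin 3 → Fin N) : IsTriEdge (edgeOf E) := by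
  refine ⟨?_, ?_⟩
  · rw [edgeOf, card_image_of_injective _ fun i j h => congrArg Prod.fst h]
    simp
  · ext i
    simp [edgeOf]

lemma _root_.IsTriEdge.exists_eq_edgeOf {e : Finset (Fin 3 × Fin N)} (he : IsTriEdge e) :
    ∃ E, e = edgeOf E := by
  have hpart (i : Fin 3) : ∃ y, (i, y) ∈ e := by
    obtain ⟨x, hx, hxi⟩ := mem_image.1 (he.2 ▸ mem_univ i : i ∈ e.image Prod.fst)
    exact ⟨x.2, by rwa [← hxi]⟩
  choose E hE using hpart
  have hsub : edgeOf E ⊆ e := fun ⟨i, y⟩ hx => by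
    obtain rfl : E i = y := mem_edgeOf.1 hx
    exact hE i
  refine ⟨E, (eq_of_subset_of_card_le hsub ?_).symm⟩
  rw [he.1, (isTriEdge_edgeOf E).1]

lemma edgeOf_eq_triple {p q r : Fin 3} (hpq : p ≠ q) (hpr : p ≠ r) (hqr : q ≠ r)
    (E : Fin 3 → Fin N) : edgeOf E = {(p, E p), (q, E q), (r, E r)} := by
  ext ⟨i, y⟩
  simp only [mem_edgeOf, mem_insert, mem_singleton, Prod.mk.injEq]
  have : i = p ∨ i = q ∨ i = r := by omega
  rcases this with rfl | rfl | rfl <;> grind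

lemma image_edgeOf {m : ℕ} (g : Fin 3 → Fin m → Fin N) (E : Fin 3 → Fin m) :
    (edgeOf E).image (fun v => (v.1, g v.1 v.2)) = edgeOf fun i => g i (E i) := by
  rw [edgeOf, image_image]
  rfl

lemma apart_iff : Apart E F ↔ E 0 ≠ F 0 ∧ E 1 ≠ F 1 ∧ E 2 ≠ F 2 := by
  simp [Apart, Fin.forall_fin_succ]

lemma meetsOnlyAt_iff {p : Fin 3} :
    MeetsOnlyAt E F p ↔ (E 0 = F 0 ↔ p = 0) ∧ (E 1 = F 1 ↔ p = 1) ∧ (E 2 = F 2 ↔ p = 2) := by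
  simp [MeetsOnlyAt, Fin.forall_fin_succ, eq_comm]

lemma Apart.symm (h : Apart E F) : Apart F E := fun i => (h i).symm

lemma Near.symm (h : Near E F) : Near F E :=
  let ⟨i, j, hij, hi, hj⟩ := h
  ⟨i, j, hij, hi.symm, hj.symm⟩

lemma Apart.not_near (h : Apart E F) : ¬Near E F :=
  fun ⟨i, _, _, hi, _⟩ => h i hi

lemma Near.not_near_of_apart (hEF : Near E F) (hGF : Apart G F) : ¬Near G E := by
  obtain ⟨i, j, hij, hi, hj⟩ := hEF
  rintro ⟨k, l, hkl, hk, hl⟩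
  have : k = i ∨ k = j ∨ l = i ∨ l = j := by omega
  rcases this with rfl | rfl | rfl | rfl
  exacts [hGF _ (hk.trans hi), hGF _ (hk.trans hj), hGF _ (hl.trans hi), hGF _ (hl.trans hj)]

lemma apart_or_meetsOnlyAt_of_not_near (h : ¬Near E F) : Apart E F ∨ ∃ p, MeetsOnlyAt E F p := by
  by_cases hEF : Apart E F
  · exact .inl hEF
  obtain ⟨p, hp⟩ : ∃ p, E p = F p := by simpa [Apart] using hEF
  refine .inr ⟨p, fun i => ⟨fun hi => ?_, fun hip => hip ▸ hp⟩⟩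
  by_contra hip
  exact h ⟨i, p, hip, hi, hp⟩

lemma exists_apart_apart (hN : 3 ≤ N) (E F : Fin 3 → Fin N) : ∃ G, Apart G E ∧ Apart G F := by
  choose G hG using fun i => Fin.exists_ne_and_ne_of_two_lt (E i) (F i) (by omega)
  exact ⟨G, fun i => (hG i).1, fun i => (hG i).2⟩

lemma Apart.comp_perm (h : Apart E F) (σ : Equiv.Perm (Fin 3)) : Apart (E ∘ σ) (F ∘ σ) :=
  fun i => h (σ i)

lemma MeetsOnlyAt.comp_perm {p : Fin 3} (h : MeetsOnlyAt E F p) (σ : Equiv.Perm (Fin 3)) :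
    MeetsOnlyAt (E ∘ σ) (F ∘ σ) (σ.symm p) := fun i => by
  simp [h (σ i), Equiv.eq_symm_apply]

end Edges

lemma noRainbowPath_of_not_hasRainbowLooseTri {c : Finset (Fin 3 × Fin N) → ℕ}
    (hc : ¬HasRainbowLooseTri c) : NoRainbowPath (c ∘ edgeOf) := by
  intro A M B p q hAB hMA hMB
  by_contra! hM
  have hMAp := (hMA p).2 rfl
  have hMBq := (hMB q).2 rfl
  have hpq : p ≠ q := fun h => hAB p (by rw [← hMAp, h, hMBq])
  obtain ⟨r, hrp, hrq⟩ := Fin.exists_ne_and_ne_of_two_lt p q (by omega)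
  have hMAr : M r ≠ A r := fun h => hrp ((hMA r).1 h)
  have hMBr : M r ≠ B r := fun h => hrq ((hMB r).1 h)
  have hMAq : M q ≠ A q := fun h => hpq ((hMA q).1 h).symm
  have hMBp : M p ≠ B p := fun h => hpq ((hMB p).1 h)
  have eA := edgeOf_eq_triple hrq.symm hpq.symm hrp A
  have eM := edgeOf_eq_triple hrp.symm hpq hrq M
  have eB := edgeOf_eq_triple hpq.symm hrq.symm hrp.symm B
  rw [hMAp] at eM
  rw [← hMBq] at eB
  refine hc ⟨![(q, A q), (r, A r), (p, A p), (r, M r), (q, M q), (p, B p), (r, B r)], ?_, ?_⟩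
  · intro a b hab
    have := hAB p
    have := hAB q
    have := hAB r
    fin_cases a <;> fin_cases b <;> simp_all [Prod.ext_iff]
  · simp only [Matrix.cons_val]
    rw [← eA, ← eM, ← eB]
    exact ⟨isTriEdge_edgeOf A, isTriEdge_edgeOf M, isTriEdge_edgeOf B, Ne.symm hM.1, hM.2.2,
      hM.2.1⟩

namespace NoRainbowPath

variable {χ : (Fin 3 → Fin N) → α}

lemma comp_perm (hχ : NoRainbowPath χ) (σ : Equiv.Perm (Fin 3)) :
    NoRainbowPath fun E => χ (E ∘ σ) :=
  fun _ _ _ _ _ hAB hMA hMB => hχ (hAB.comp_perm σ) (hMA.comp_perm σ) (hMB.comp_perm σ)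

lemma not_apart (hχ : NoRainbowPath χ) {A B T : Fin 3 → Fin N} (hAB : Apart A B)
    (hTA : Apart T A) (cAB : χ A ≠ χ B) (cTA : χ T ≠ χ A) (cTB : χ T ≠ χ B) : ¬Apart T B := by
  intro hTB
  have hA : MeetsOnlyAt ![A 0, B 1, T 2] A 0 := by
    simp only [meetsOnlyAt_iff, Matrix.cons_val]; grind [Apart]
  have hB : MeetsOnlyAt ![A 0, B 1, T 2] B 1 := by
    simp only [meetsOnlyAt_iff, Matrix.cons_val]; grind [Apart]
  have hT : MeetsOnlyAt ![A 0, B 1, T 2] T 2 := by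
    simp only [meetsOnlyAt_iff, Matrix.cons_val]; grind [Apart]
  have := hχ hAB hA hB
  have := hχ hTA.symm hA hT
  have := hχ hTB.symm hB hT
  grind

/-- `M` is the middle of the path `R, M, Q` and an end of the path `P, R, M`. -/
lemma color_eq_of_paths (hχ : NoRainbowPath χ) {P Q R M : Fin 3 → Fin N} {p q r : Fin 3}
    (hRQ : Apart R Q) (hPM : Apart P M) (hRP : MeetsOnlyAt R P p)
    (hMR : MeetsOnlyAt M R q) (hMQ : MeetsOnlyAt M Q r)
    (cPQ : χ P ≠ χ Q) (cRP : χ R ≠ χ P) (cRQ : χ R ≠ χ Q) : χ M = χ R := by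
  have hRM : MeetsOnlyAt R M q := fun i => by rw [eq_comm, hMR i]
  have := hχ hRQ hMR hMQ
  have := hχ hPM hRP hRM
  grind

lemma not_meetsOnlyAt_zero (hχ : NoRainbowPath χ) (hN : 3 ≤ N) {A B T : Fin 3 → Fin N}
    (hAB : Apart A B) (hTB : Apart T B) (cAB : χ A ≠ χ B) (cTA : χ T ≠ χ A)
    (cTB : χ T ≠ χ B) : ¬MeetsOnlyAt T A 0 := by
  intro hTA
  rw [meetsOnlyAt_iff] at hTA
  obtain ⟨x, hxA, hxB⟩ := Fin.exists_ne_and_ne_of_two_lt (A 0) (B 0) (by omega)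
  have cM : χ ![x, T 1, B 2] = χ T := by
    refine hχ.color_eq_of_paths (p := 0) (q := 1) (r := 2) hTB ?_ ?_ ?_ ?_ cAB cTA cTB <;>
      simp only [meetsOnlyAt_iff, apart_iff, Matrix.cons_val] <;> grind [Apart]
  have cZ : χ ![x, B 1, T 2] = χ T := by
    refine hχ.color_eq_of_paths (p := 0) (q := 2) (r := 1) hTB ?_ ?_ ?_ ?_ cAB cTA cTB <;>
      simp only [meetsOnlyAt_iff, apart_iff, Matrix.cons_val] <;> grind [Apart]
  have cW : χ ![B 0, A 1, T 2] = χ B := by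
    refine hχ.color_eq_of_paths (P := ![x, T 1, B 2]) (p := 2) (q := 0) (r := 1) hAB.symm
      ?_ ?_ ?_ ?_ (by rwa [cM]) (by rw [cM]; exact cTB.symm) cAB.symm <;>
      simp only [meetsOnlyAt_iff, apart_iff, Matrix.cons_val] <;> grind [Apart]
  -- the path `![x, B 1, T 2]`, `![B 0, A 1, T 2]`, `A` would be rainbow
  have := hχ (A := ![x, B 1, T 2]) (M := ![B 0, A 1, T 2]) (B := A) (p := 2) (q := 1)
    (by simp only [apart_iff, Matrix.cons_val]; grind [Apart])
    (by simp only [meetsOnlyAt_iff, Matrix.cons_val]; grind [Apart])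
    (by simp only [meetsOnlyAt_iff, Matrix.cons_val]; grind [Apart])
  grind

lemma not_meetsOnlyAt (hχ : NoRainbowPath χ) (hN : 3 ≤ N) {A B T : Fin 3 → Fin N} {p : Fin 3}
    (hAB : Apart A B) (hTB : Apart T B) (cAB : χ A ≠ χ B) (cTA : χ T ≠ χ A)
    (cTB : χ T ≠ χ B) : ¬MeetsOnlyAt T A p := by
  intro hTA
  let σ := Equiv.swap 0 p
  have hσ (E : Fin 3 → Fin N) : (E ∘ σ) ∘ σ.symm = E := by ext; simp
  refine (hχ.comp_perm σ.symm).not_meetsOnlyAt_zero hN (hAB.comp_perm σ) (hTB.comp_perm σ)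
    (by simpa only [hσ]) (by simpa only [hσ]) (by simpa only [hσ]) ?_
  simpa [σ] using hTA.comp_perm σ

theorem near_or_near (hχ : NoRainbowPath χ) (hN : 3 ≤ N) {A B T : Fin 3 → Fin N}
    (hAB : Apart A B) (cAB : χ A ≠ χ B) (cTA : χ T ≠ χ A) (cTB : χ T ≠ χ B) :
    Near T A ∨ Near T B := by
  by_contra! ⟨hnA, hnB⟩
  rcases apart_or_meetsOnlyAt_of_not_near hnA with hA | ⟨p, hA⟩ <;>
    rcases apart_or_meetsOnlyAt_of_not_near hnB with hB | ⟨q, hB⟩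
  · exact hχ.not_apart hAB hA cAB cTA cTB hB
  · exact hχ.not_meetsOnlyAt hN hAB.symm hA cAB.symm cTB cTA hB
  · exact hχ.not_meetsOnlyAt hN hAB hB cAB cTA cTB hA
  · have := hχ hAB hA hB
    tauto

lemma color_eq_of_not_near (hχ : NoRainbowPath χ) (hN : 3 ≤ N) {A B H Z : Fin 3 → Fin N}
    (hAB : Apart A B) (hHB : Apart H B) (cAB : χ A ≠ χ B) (cHA : χ H ≠ χ A) (cHB : χ H ≠ χ B)
    (hZA : ¬Near Z A) (hZH : ¬Near Z H) (hZB : ¬Near Z B) : χ Z = χ B := by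
  by_contra cZB
  by_cases cZA : χ Z = χ A
  · have := hχ.near_or_near hN hHB cHB (cZA ▸ cHA.symm) cZB
    tauto
  · have := hχ.near_or_near hN hAB cAB cZA cZB
    tauto

lemma color_eq_of_apart (hχ : NoRainbowPath χ) (hN : 3 ≤ N) {A B H F : Fin 3 → Fin N}
    (hAB : Apart A B) (hHB : Apart H B) (hHA : Near H A)
    (cAB : χ A ≠ χ B) (cHA : χ H ≠ χ A) (cHB : χ H ≠ χ B) (hFA : Apart F A) : χ F = χ B := by
  by_contra cFB
  have hFH : ¬Near F H := hHA.not_near_of_apart hFA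
  by_cases hFB : Near F B
  · -- an edge `Y` disjoint from `A` and `F` has the color of `B`; the pair `Y`, `F` then forces
    -- `F` to have the color of `A` and also that of `H`
    obtain ⟨Y, hYA, hYF⟩ := exists_apart_apart hN A F
    have cY : χ Y = χ B := hχ.color_eq_of_not_near hN hAB hHB cAB cHA cHB hYA.not_near
      (hHA.not_near_of_apart hYA) (hFB.symm.not_near_of_apart hYF)
    have cFA : χ F = χ A := by
      by_contra cFA
      have := hχ.near_or_near hN hYF (cY ▸ Ne.symm cFB) (by rwa [cY]) (Ne.symm cFA)
      exact this.elim (fun h => hYA.not_near h.symm) (fun h => hFA.not_near h.symm)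
    have := hχ.near_or_near hN hYF (cY ▸ Ne.symm cFB) (cY ▸ cHB) (cFA ▸ cHA)
    exact this.elim (fun h => hHA.not_near_of_apart hYA h.symm) (fun h => hFH h.symm)
  · exact cFB (hχ.color_eq_of_not_near hN hAB hHB cAB cHA cHB hFA.not_near hFH hFB)

lemma exists_apart_monochromatic_of_near (hχ : NoRainbowPath χ) (hN : 3 ≤ N)
    {A B H : Fin 3 → Fin N} (hAB : Apart A B) (hHA : Near H A)
    (cAB : χ A ≠ χ B) (cHA : χ H ≠ χ A) (cHB : χ H ≠ χ B) :
    ∃ b, ∀ F, Apart F A → χ F = b := by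
  by_cases hHB : Apart H B
  · exact ⟨χ B, fun F => hχ.color_eq_of_apart hN hAB hHB hHA cAB cHA cHB⟩
  -- otherwise replace `B` by an edge `B'` of the same color that is disjoint from `A`, `B`, `H`
  obtain ⟨B', hB'A, hB'B⟩ := exists_apart_apart hN A B
  have hHB' : Apart H B' := by
    obtain ⟨i, j, hij, hi, hj⟩ := hHA
    obtain ⟨k, hk⟩ : ∃ k, H k = B k := by simpa [Apart] using hHB
    have hki : k ≠ i := by rintro rfl; exact hAB k (hi.symm.trans hk)
    have hkj : k ≠ j := by rintro rfl; exact hAB k (hj.symm.trans hk)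
    intro l hl
    have : l = i ∨ l = j ∨ l = k := by omega
    rcases this with rfl | rfl | rfl
    exacts [hB'A l (hl.symm.trans hi), hB'A l (hl.symm.trans hj), hB'B l (hl.symm.trans hk)]
  have cB' : χ B' = χ B := by
    by_contra cB'B
    have cB'A : χ B' = χ A := by
      by_contra cB'A
      exact (hχ.near_or_near hN hAB cAB cB'A cB'B).elim hB'A.not_near hB'B.not_near
    have := hχ.near_or_near hN hHB'.symm (by rw [cB'A]; exact cHA.symm) (Ne.symm cB'B) cHB.symm
    exact this.elim hB'B.symm.not_near (hHA.not_near_of_apart hAB.symm)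
  exact ⟨χ B', fun F => hχ.color_eq_of_apart hN hB'A.symm hHB' hHA (cB' ▸ cAB) cHA (cB' ▸ cHB)⟩

theorem exists_apart_monochromatic (hχ : NoRainbowPath χ) (hN : 3 ≤ N)
    (h : ¬∃ a b, ∀ E, χ E = a ∨ χ E = b) : ∃ u b, ∀ E, Apart E u → χ E = b := by
  push Not at h
  obtain ⟨A, B, hAB, cAB⟩ : ∃ A B, Apart A B ∧ χ A ≠ χ B := by
    let E₀ : Fin 3 → Fin N := fun _ => ⟨0, by omega⟩
    obtain ⟨E₁, cE₁, -⟩ := h (χ E₀) (χ E₀)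
    obtain ⟨G, hG₀, hG₁⟩ := exists_apart_apart hN E₀ E₁
    by_cases cG : χ G = χ E₀
    · exact ⟨G, E₁, hG₁, cG ▸ cE₁.symm⟩
    · exact ⟨G, E₀, hG₀, cG⟩
  obtain ⟨H, cHA, cHB⟩ := h (χ A) (χ B)
  rcases hχ.near_or_near hN hAB cAB cHA cHB with hHA | hHB
  · exact ⟨A, hχ.exists_apart_monochromatic_of_near hN hAB hHA cAB cHA cHB⟩
  · exact ⟨B, hχ.exists_apart_monochromatic_of_near hN hAB.symm hHB cAB.symm cHB cHA⟩

end NoRainbowPath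

end Tripartite

open Tripartite

namespace TriGraph

variable {N : ℕ} {α : Type*}

lemma hasCopy_m (H : TriGraph) : H.HasCopy H.m :=
  ⟨id, Function.injective_id, fun e he => by simpa using H.isTri e he⟩

lemma HasCopy.m_le {H : TriGraph} {t : ℕ} (h : H.HasCopy t) : H.m ≤ t := by
  obtain ⟨f, hf, -⟩ := h
  simpa using Fintype.card_le_of_injective f hf

lemma HasMonoCopy.of_comp {β : Type*} {H : TriGraph} {c : Finset (Fin 3 × Fin N) → α}
    (g : α → β) (hg : Set.InjOn g (c '' {e | IsTriEdge e})) (h : H.HasMonoCopy (g ∘ c)) :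
    H.HasMonoCopy c := by
  obtain ⟨f, hf, htri, a, ha⟩ := h
  refine ⟨f, hf, htri, ?_⟩
  rcases H.edges.eq_empty_or_nonempty with hE | ⟨e₀, he₀⟩
  · exact ⟨c ∅, by simp [hE]⟩
  · exact ⟨c (e₀.image f), fun e he => hg ⟨_, htri e he, rfl⟩ ⟨_, htri e₀ he₀, rfl⟩
      ((ha e he).trans (ha e₀ he₀).symm)⟩

lemma hasMonoCopy_self_of_m_le_one (H : TriGraph) (hm : H.m ≤ 1)
    (c : Finset (Fin 3 × Fin H.m) → α) : H.HasMonoCopy c := by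
  have : Subsingleton (Fin H.m) := Fin.subsingleton_iff_le_one.2 hm
  have hsub : ∀ e ∈ H.edges, ∀ e' ∈ H.edges, e = e' := by
    intro e he e' he'
    obtain ⟨E, rfl⟩ := (H.isTri e he).exists_eq_edgeOf
    obtain ⟨E', rfl⟩ := (H.isTri e' he').exists_eq_edgeOf
    rw [Subsingleton.elim E E']
  refine ⟨id, Function.injective_id, fun e he => by simpa using H.isTri e he, ?_⟩
  rcases H.edges.eq_empty_or_nonempty with hE | ⟨e₀, he₀⟩
  · exact ⟨c ∅, by simp [hE]⟩
  · exact ⟨c e₀, fun e he => by simp [hsub e he e₀ he₀]⟩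

lemma hasMonoCopy_of_forall_apart {H : TriGraph} (hm : H.m < N)
    {c : Finset (Fin 3 × Fin N) → α} {u : Fin 3 → Fin N} {b : α}
    (hc : ∀ E, Apart E u → c (edgeOf E) = b) : H.HasMonoCopy c := by
  obtain ⟨n, rfl⟩ : ∃ n, N = n + 1 := ⟨N - 1, by omega⟩
  let g (i : Fin 3) (x : Fin H.m) : Fin (n + 1) := (u i).succAbove (Fin.castLE (by omega) x)
  have hg : ∀ e ∈ H.edges, ∃ E : Fin 3 → Fin H.m,
      e.image (fun v => (v.1, g v.1 v.2)) = edgeOf fun i => g i (E i) := fun e he => by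
    obtain ⟨E, rfl⟩ := (H.isTri e he).exists_eq_edgeOf
    exact ⟨E, image_edgeOf g E⟩
  refine ⟨fun v => (v.1, g v.1 v.2), ?_, fun e he => ?_, b, fun e he => ?_⟩
  · rintro ⟨i, x⟩ ⟨j, y⟩ h
    obtain ⟨rfl, h⟩ := Prod.mk.inj h
    simpa [g, Fin.succAbove_right_injective.eq_iff, (Fin.castLE_injective _).eq_iff] using h
  · obtain ⟨E, hE⟩ := hg e he
    exact hE ▸ isTriEdge_edgeOf _
  · obtain ⟨E, hE⟩ := hg e he
    exact hE ▸ hc _ fun i => Fin.succAbove_ne _ _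

lemma forall_hasMonoCopy_fin_two {H : TriGraph}
    (h : ∀ c : Finset (Fin 3 × Fin N) → ℕ, H.HasMonoCopy c ∨ HasRainbowLooseTri c)
    (c : Finset (Fin 3 × Fin N) → Fin 2) : H.HasMonoCopy c := by
  rcases h (Fin.val ∘ c) with h | ⟨v, -, -, -, -, h₁, h₂, h₃⟩
  · exact h.of_comp _ Fin.val_injective.injOn
  · have := (c {v 0, v 1, v 2}).isLt
    have := (c {v 2, v 3, v 4}).isLt
    have := (c {v 4, v 5, v 6}).isLt
    simp only [Function.comp_apply] at h₁ h₂ h₃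
    omega

theorem hasMonoCopy_or_hasRainbowLooseTri {H : TriGraph} (hm : H.m < N) (hN : 3 ≤ N)
    (hR : ∀ c : Finset (Fin 3 × Fin N) → Fin 2, H.HasMonoCopy c)
    (c : Finset (Fin 3 × Fin N) → ℕ) : H.HasMonoCopy c ∨ HasRainbowLooseTri c := by
  by_cases hc : HasRainbowLooseTri c
  · exact .inr hc
  refine .inl ?_
  by_cases h2 : ∃ a b, ∀ E, c (edgeOf E) = a ∨ c (edgeOf E) = b
  · obtain ⟨a, b, hab⟩ := h2
    let g (k : ℕ) : Fin 2 := if k = a then 0 else 1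
    refine (hR (g ∘ c)).of_comp g ?_
    rintro _ ⟨e, he, rfl⟩ _ ⟨e', he', rfl⟩ h
    obtain ⟨E, rfl⟩ := IsTriEdge.exists_eq_edgeOf he
    obtain ⟨E', rfl⟩ := IsTriEdge.exists_eq_edgeOf he'
    rcases hab E with h₁ | h₁ <;> rcases hab E' with h₂ | h₂ <;> simp_all [g]
  · obtain ⟨u, b, hb⟩ :=
      (noRainbowPath_of_not_hasRainbowLooseTri hc).exists_apart_monochromatic hN h2
    exact hasMonoCopy_of_forall_apart hm hb

end TriGraph

lemma tOf_eq (H : TriGraph) : tOf H = H.m :=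
  le_antisymm (Nat.sInf_le H.hasCopy_m) (le_csInf ⟨_, H.hasCopy_m⟩ fun _ => TriGraph.HasCopy.m_le)

/-- For every 3-partite 3-graph `H` with `R'₂(H) ≥ t(H) + 1`, `f'(H, ℒ) = R'₂(H)`. -/
theorem constrained_ramsey_loose_tripartite (H : TriGraph)
    (hR : tOf H + 1 ≤ ramseyTwoTri H) :
    constrainedRamseyLooseTri H = ramseyTwoTri H := by
  rw [tOf_eq] at hR
  have hRmem : ramseyTwoTri H ∈ {N | ∀ c : Finset (Fin 3 × Fin N) → Fin 2, H.HasMonoCopy c} :=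
    Nat.sInf_mem (Nat.nonempty_of_pos_sInf (show 0 < ramseyTwoTri H by omega))
  have hm : 2 ≤ H.m := by
    by_contra! hm
    have : ramseyTwoTri H ≤ H.m := Nat.sInf_le fun c => H.hasMonoCopy_self_of_m_le_one (by omega) c
    omega
  have hRf : ramseyTwoTri H ∈
      {N | ∀ c : Finset (Fin 3 × Fin N) → ℕ, H.HasMonoCopy c ∨ HasRainbowLooseTri c} :=
    TriGraph.hasMonoCopy_or_hasRainbowLooseTri (by omega) (by omega) hRmem
  exact le_antisymm (Nat.sInf_le hRf)
    (Nat.sInf_le fun c => TriGraph.forall_hasMonoCopy_fin_two (Nat.sInf_mem ⟨_, hRf⟩) c)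
end
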